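/- arXiv:2412.17324 — 10 statements merged into one kernel-verified Lean document; each statement's English description precedes it below -/
import Mathlib

section
/- Generalized Laplace expansion: Let R be a commutative ring, B an n×n matrix over R, and S ⊆ {1,…,n} a set of k column indices. Then det(B) = Σ_T (−1)^{(Σ_{i∈T} i) + (Σ_{j∈S} j)} · det(B[T,S]) · det(B[Tᶜ,Sᶜ]), where the sum runs over all k-element subsets T of {1,…,n}, B[T,S] denotes the k×k submatrix of B with rows indexed by T (in increasing order) and columns indexed by S (in increasing order), and B[Tᶜ,Sᶜ] the complementary (n−k)×(n−k) submatrix. -/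
open Finset Equiv

namespace LaplaceAux

variable {n k : ℕ}

lemma card_compl' {T : Finset (Fin n)} (hT : T.card = k) : Tᶜ.card = n - k := by
  rw [Finset.card_compl, hT, Fintype.card_fin]

lemma k_le_n {T : Finset (Fin n)} (hT : T.card = k) : k ≤ n := by
  have := T.card_le_univ
  simp only [Finset.card_univ, Fintype.card_fin, hT] at this
  exact this

def t' {n : ℕ} (t : Fin n) (h0 : 0 < (t : ℕ)) : Fin n := ⟨(t : ℕ) - 1, by omega⟩

lemma t'_lt {n : ℕ} (t : Fin n) (h0 : 0 < (t : ℕ)) : t' t h0 < t := by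
  simp only [t', Fin.lt_def]; omega

lemma t'_ne {n : ℕ} (t : Fin n) (h0 : 0 < (t : ℕ)) : t' t h0 ≠ t := ne_of_lt (t'_lt t h0)

/-- `T` with `t` replaced by `t - 1`. -/
def stepSet {n : ℕ} (T : Finset (Fin n)) (t : Fin n) (h0 : 0 < (t : ℕ)) : Finset (Fin n) :=
  insert (t' t h0) (T.erase t)

section Step

variable {T : Finset (Fin n)} {t : Fin n} {h0 : 0 < (t : ℕ)}

lemma stepSet_card (hT : T.card = k) (ht : t ∈ T) (hpred : t' t h0 ∉ T) :
    (stepSet T t h0).card = k := by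
  rw [stepSet, Finset.card_insert_of_notMem (fun h => hpred (Finset.mem_of_mem_erase h)),
    Finset.card_erase_of_mem ht]
  have : 0 < T.card := Finset.card_pos.mpr ⟨t, ht⟩
  omega

lemma stepSet_sum (ht : t ∈ T) (hpred : t' t h0 ∉ T) :
    (∑ i ∈ stepSet T t h0, (i : ℕ)) + 1 = ∑ i ∈ T, (i : ℕ) := by
  rw [stepSet, Finset.sum_insert (fun h => hpred (Finset.mem_of_mem_erase h)),
    ← Finset.add_sum_erase T _ ht]
  simp only [t']
  omega

lemma stepSet_compl (ht : t ∈ T) (hpred : t' t h0 ∉ T) :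
    (stepSet T t h0)ᶜ = insert t (Tᶜ.erase (t' t h0)) := by
  ext x
  simp only [stepSet, Finset.mem_compl, Finset.mem_insert, Finset.mem_erase]
  constructor
  · intro h
    push_neg at h
    obtain ⟨h1, h2⟩ := h
    by_cases hx : x = t
    · exact Or.inl hx
    · exact Or.inr ⟨h1, h2 hx⟩
  · rintro (rfl | ⟨h1, h2⟩)
    · push_neg
      exact ⟨fun h => (t'_ne _ h0) h.symm, fun h _ => absurd rfl h⟩
    · push_neg
      exact ⟨h1, fun _ => h2⟩

lemma step_orderEmb (hT : T.card = k) (ht : t ∈ T) (hpred : t' t h0 ∉ T) :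
    ⇑((stepSet T t h0).orderEmbOfFin (stepSet_card hT ht hpred)) =
      ⇑(Equiv.swap (t' t h0) t) ∘ ⇑(T.orderEmbOfFin hT) := by
  refine (Finset.orderEmbOfFin_unique _ ?_ ?_).symm
  · intro i
    have hmem := Finset.orderEmbOfFin_mem T hT i
    by_cases h : T.orderEmbOfFin hT i = t
    · simp only [Function.comp_apply, h, Equiv.swap_apply_right, stepSet]
      exact Finset.mem_insert_self _ _
    · have hne' : T.orderEmbOfFin hT i ≠ t' t h0 := fun he => hpred (he ▸ hmem)
      simp only [Function.comp_apply, Equiv.swap_apply_of_ne_of_ne hne' h, stepSet]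
      exact Finset.mem_insert_of_mem (Finset.mem_erase.2 ⟨h, hmem⟩)
  · intro i j hij
    simp only [Function.comp_apply]
    have hab : T.orderEmbOfFin hT i < T.orderEmbOfFin hT j :=
      (T.orderEmbOfFin hT).strictMono hij
    set a := T.orderEmbOfFin hT i with ha
    set b := T.orderEmbOfFin hT j with hb
    have haT : a ∈ T := Finset.orderEmbOfFin_mem T hT i
    have hbT : b ∈ T := Finset.orderEmbOfFin_mem T hT j
    have ha' : a ≠ t' t h0 := fun he => hpred (he ▸ haT)
    have hb' : b ≠ t' t h0 := fun he => hpred (he ▸ hbT)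
    by_cases hat : a = t
    · have hbt : b ≠ t := fun h => absurd (hat ▸ h ▸ hab) (lt_irrefl _)
      rw [hat, Equiv.swap_apply_right, Equiv.swap_apply_of_ne_of_ne hb' hbt]
      exact lt_trans (t'_lt t h0) (hat ▸ hab)
    · by_cases hbt : b = t
      · rw [hbt, Equiv.swap_apply_right, Equiv.swap_apply_of_ne_of_ne ha' hat]
        rw [Fin.lt_def] at hab ⊢
        have : (a : ℕ) ≠ (t : ℕ) - 1 := fun h => ha' (Fin.ext (by simp [t', h]))
        simp only [t']
        rw [hbt] at hab
        omega
      · rw [Equiv.swap_apply_of_ne_of_ne ha' hat, Equiv.swap_apply_of_ne_of_ne hb' hbt]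
        exact hab

lemma step_orderEmb_compl (hT : T.card = k) (ht : t ∈ T) (hpred : t' t h0 ∉ T) :
    ⇑((stepSet T t h0)ᶜ.orderEmbOfFin (card_compl' (stepSet_card hT ht hpred))) =
      ⇑(Equiv.swap (t' t h0) t) ∘ ⇑(Tᶜ.orderEmbOfFin (card_compl' hT)) := by
  refine (Finset.orderEmbOfFin_unique _ ?_ ?_).symm
  · intro i
    have hmem := Finset.orderEmbOfFin_mem Tᶜ (card_compl' hT) i
    rw [Finset.mem_compl] at hmem
    rw [stepSet_compl ht hpred]
    by_cases h : Tᶜ.orderEmbOfFin (card_compl' hT) i = t' t h0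
    · simp only [Function.comp_apply, h, Equiv.swap_apply_left]
      exact Finset.mem_insert_self _ _
    · have hne' : Tᶜ.orderEmbOfFin (card_compl' hT) i ≠ t := fun he => hmem (he ▸ ht)
      simp only [Function.comp_apply, Equiv.swap_apply_of_ne_of_ne h hne']
      exact Finset.mem_insert_of_mem (Finset.mem_erase.2 ⟨h, Finset.mem_compl.2 hmem⟩)
  · intro i j hij
    have hab : Tᶜ.orderEmbOfFin (card_compl' hT) i < Tᶜ.orderEmbOfFin (card_compl' hT) j :=
      (Tᶜ.orderEmbOfFin (card_compl' hT)).strictMono hij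
    simp only [Function.comp_apply]
    set a := Tᶜ.orderEmbOfFin (card_compl' hT) i with ha
    set b := Tᶜ.orderEmbOfFin (card_compl' hT) j with hb
    have haT : a ∉ T := Finset.mem_compl.1 (Finset.orderEmbOfFin_mem Tᶜ (card_compl' hT) i)
    have hbT : b ∉ T := Finset.mem_compl.1 (Finset.orderEmbOfFin_mem Tᶜ (card_compl' hT) j)
    have hat : a ≠ t := fun he => haT (he ▸ ht)
    have hbt : b ≠ t := fun he => hbT (he ▸ ht)
    by_cases ha' : a = t' t h0
    · have hb' : b ≠ t' t h0 := fun h => absurd (ha' ▸ h ▸ hab) (lt_irrefl _)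
      rw [ha', Equiv.swap_apply_left, Equiv.swap_apply_of_ne_of_ne hb' hbt]
      rw [Fin.lt_def] at hab ⊢
      rw [ha'] at hab
      simp only [t'] at hab ⊢
      have : (b : ℕ) ≠ (t : ℕ) := fun h => hbt (Fin.ext h)
      omega
    · by_cases hb' : b = t' t h0
      · rw [hb', Equiv.swap_apply_left, Equiv.swap_apply_of_ne_of_ne ha' hat]
        rw [hb'] at hab
        exact lt_trans hab (t'_lt t h0)
      · rw [Equiv.swap_apply_of_ne_of_ne ha' hat, Equiv.swap_apply_of_ne_of_ne hb' hbt]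
        exact hab

end Step

/-- The equivalence `Fin k ⊕ Fin (n-k) ≃ Fin n` built from the order embeddings of `T`, `Tᶜ`. -/
noncomputable def sumEquiv (T : Finset (Fin n)) (hT : T.card = k) :
    (Fin k ⊕ Fin (n - k)) ≃ Fin n :=
  Equiv.ofBijective (Sum.elim (T.orderEmbOfFin hT) (Tᶜ.orderEmbOfFin (card_compl' hT)))
    (by
      constructor
      · rintro (a | a) (b | b) hab <;> simp only [Sum.elim_inl, Sum.elim_inr] at hab
        · simp [(T.orderEmbOfFin hT).injective hab]
        · exact absurd (hab ▸ Finset.orderEmbOfFin_mem T hT a)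
            (Finset.mem_compl.1 (Finset.orderEmbOfFin_mem Tᶜ (card_compl' hT) b))
        · exact absurd (hab.symm ▸ Finset.orderEmbOfFin_mem T hT b)
            (Finset.mem_compl.1 (Finset.orderEmbOfFin_mem Tᶜ (card_compl' hT) a))
        · simp [(Tᶜ.orderEmbOfFin (card_compl' hT)).injective hab]
      · intro x
        by_cases hx : x ∈ T
        · have : x ∈ Set.range (T.orderEmbOfFin hT) := by
            rw [Finset.range_orderEmbOfFin]; exact hx
          obtain ⟨i, hi⟩ := this
          exact ⟨Sum.inl i, hi⟩
        · have hx' : x ∈ Tᶜ := Finset.mem_compl.2 hx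
          have : x ∈ Set.range (Tᶜ.orderEmbOfFin (card_compl' hT)) := by
            rw [Finset.range_orderEmbOfFin]; exact hx'
          obtain ⟨i, hi⟩ := this
          exact ⟨Sum.inr i, hi⟩)

@[simp] lemma sumEquiv_inl (T : Finset (Fin n)) (hT : T.card = k) (i : Fin k) :
    sumEquiv T hT (Sum.inl i) = T.orderEmbOfFin hT i := rfl

@[simp] lemma sumEquiv_inr (T : Finset (Fin n)) (hT : T.card = k) (i : Fin (n - k)) :
    sumEquiv T hT (Sum.inr i) = Tᶜ.orderEmbOfFin (card_compl' hT) i := rfl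


/-- `Fin n ≃ Fin k ⊕ Fin (n - k)`. -/
def pre (h : k ≤ n) : Fin n ≃ (Fin k ⊕ Fin (n - k)) :=
  (finCongr ((Nat.add_sub_cancel' h).symm)).trans finSumFinEquiv.symm

/-- The shuffle permutation associated to `T`. -/
noncomputable def shuffle (T : Finset (Fin n)) (hT : T.card = k) : Equiv.Perm (Fin n) :=
  (pre (k_le_n hT)).trans (sumEquiv T hT)

lemma pre_symm_inl (h : k ≤ n) (i : Fin k) :
    (pre h).symm (Sum.inl i) = ⟨(i : ℕ), lt_of_lt_of_le i.2 h⟩ := by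
  simp only [pre, Equiv.symm_trans_apply, Equiv.symm_symm, finSumFinEquiv_apply_left,
    finCongr_symm, finCongr_apply]
  ext
  simp

lemma pre_symm_inr (h : k ≤ n) (i : Fin (n - k)) :
    (pre h).symm (Sum.inr i) = ⟨k + (i : ℕ), by omega⟩ := by
  simp only [pre, Equiv.symm_trans_apply, Equiv.symm_symm, finSumFinEquiv_apply_right,
    finCongr_symm, finCongr_apply]
  ext
  simp

section StepPerm

variable {T : Finset (Fin n)} {t : Fin n} {h0 : 0 < (t : ℕ)}

lemma shuffle_step (hT : T.card = k) (ht : t ∈ T) (hpred : t' t h0 ∉ T) :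
    shuffle (stepSet T t h0) (stepSet_card hT ht hpred) =
      Equiv.swap (t' t h0) t * shuffle T hT := by
  have h1 := step_orderEmb hT ht hpred
  have h2 := step_orderEmb_compl hT ht hpred
  have key : ∀ y : Fin k ⊕ Fin (n - k),
      sumEquiv (stepSet T t h0) (stepSet_card hT ht hpred) y =
        Equiv.swap (t' t h0) t (sumEquiv T hT y) := by
    rintro (i | i)
    · simpa using congrFun h1 i
    · simpa using congrFun h2 i
  ext x
  simp only [shuffle, Equiv.trans_apply, Equiv.Perm.mul_apply]
  exact congrArg Fin.val (key _)

end StepPerm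


section Base

/-- The initial segment `{0, ..., k-1}` of `Fin n`. -/
def initSeg (n k : ℕ) : Finset (Fin n) := Finset.univ.filter (fun x => (x : ℕ) < k)

lemma initSeg_image (h : k ≤ n) : (initSeg n k).image Fin.val = Finset.range k := by
  ext j
  simp only [initSeg, Finset.mem_image, Finset.mem_filter, Finset.mem_univ, true_and,
    Finset.mem_range]
  constructor
  · rintro ⟨x, hx, rfl⟩; exact hx
  · intro hj; exact ⟨⟨j, lt_of_lt_of_le hj h⟩, hj, rfl⟩

lemma initSeg_card (h : k ≤ n) : (initSeg n k).card = k := by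
  have h2 := Finset.card_image_of_injective (initSeg n k) Fin.val_injective
  rw [initSeg_image h, Finset.card_range] at h2
  exact h2.symm

lemma initSeg_sum (h : k ≤ n) : (∑ i ∈ initSeg n k, (i : ℕ)) = ∑ i ∈ Finset.range k, i := by
  rw [← initSeg_image h, Finset.sum_image (fun x _ y _ hxy => Fin.val_injective hxy)]

lemma initSeg_orderEmb (h : k ≤ n) :
    ⇑((initSeg n k).orderEmbOfFin (initSeg_card h)) =
      fun i : Fin k => (⟨(i : ℕ), lt_of_lt_of_le i.2 h⟩ : Fin n) := by
  refine (Finset.orderEmbOfFin_unique _ ?_ ?_).symm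
  · intro i
    simp only [initSeg, Finset.mem_filter, Finset.mem_univ, true_and]
    exact i.2
  · intro i j hij
    exact Fin.mk_lt_mk.mpr hij

lemma initSeg_compl_orderEmb (h : k ≤ n) :
    ⇑((initSeg n k)ᶜ.orderEmbOfFin (card_compl' (initSeg_card h))) =
      fun i : Fin (n - k) => (⟨k + (i : ℕ), by omega⟩ : Fin n) := by
  refine (Finset.orderEmbOfFin_unique _ ?_ ?_).symm
  · intro i
    simp only [Finset.mem_compl, initSeg, Finset.mem_filter, Finset.mem_univ, true_and, not_lt]
    omega
  · intro i j hij
    have hij' : (i : ℕ) < (j : ℕ) := hij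
    exact Fin.mk_lt_mk.mpr (by omega)

lemma shuffle_initSeg (h : k ≤ n) : shuffle (initSeg n k) (initSeg_card h) = 1 := by
  have key : sumEquiv (initSeg n k) (initSeg_card h) = (pre h).symm := by
    ext y
    rcases y with i | i
    · rw [pre_symm_inl h i]
      exact congrArg Fin.val (congrFun (initSeg_orderEmb h) i)
    · rw [pre_symm_inr h i]
      exact congrArg Fin.val (congrFun (initSeg_compl_orderEmb h) i)
  have : shuffle (initSeg n k) (initSeg_card h) = (pre h).trans (pre h).symm := by
    rw [shuffle, key]
  rw [this, Equiv.self_trans_symm]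
  rfl

/-- A set with no "movable" element is the initial segment. -/
lemma eq_initSeg {T : Finset (Fin n)} (hT : T.card = k)
    (H : ∀ t ∈ T, ∀ (h0 : 0 < (t : ℕ)), t' t h0 ∈ T) : T = initSeg n k := by
  have h := k_le_n hT
  -- downward closedness
  have key : ∀ d : ℕ, ∀ t : Fin n, t ∈ T → ∀ hm : (t : ℕ) - d < n, (⟨(t : ℕ) - d, hm⟩ : Fin n) ∈ T := by
    intro d
    induction d with
    | zero => intro t htT hm; simpa using htT
    | succ d IH =>
      intro t htT hm
      have hm' : (t : ℕ) - d < n := by omega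
      have hd : (⟨(t : ℕ) - d, hm'⟩ : Fin n) ∈ T := IH t htT hm'
      by_cases h0 : 0 < (t : ℕ) - d
      · have hmem := H _ hd h0
        have heq : (⟨(t : ℕ) - (d + 1), hm⟩ : Fin n) = t' ⟨(t : ℕ) - d, hm'⟩ h0 := by
          apply Fin.ext
          simp only [t']
          omega
        rw [heq]
        exact hmem
      · have heq : (⟨(t : ℕ) - (d + 1), hm⟩ : Fin n) = ⟨(t : ℕ) - d, hm'⟩ := by
          apply Fin.ext
          simp only
          omega
        rw [heq]
        exact hd
  -- initSeg ⊆ T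
  have hsub : initSeg n k ⊆ T := by
    intro x hx
    simp only [initSeg, Finset.mem_filter, Finset.mem_univ, true_and] at hx
    -- T has an element with value ≥ x
    have hne : T.Nonempty := by
      rw [← Finset.card_pos, hT]; omega
    obtain ⟨m, hmT, hmax⟩ := T.exists_max_image (fun y => (y : ℕ)) hne
    have hxm : (x : ℕ) ≤ (m : ℕ) := by
      by_contra hc
      push_neg at hc
      -- all elements of T are < x, so T.card ≤ x < k
      have : T ⊆ initSeg n (x : ℕ) := by
        intro y hy
        simp only [initSeg, Finset.mem_filter, Finset.mem_univ, true_and]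
        exact lt_of_le_of_lt (hmax y hy) hc
      have hcard := Finset.card_le_card this
      have hx2 : (initSeg n (x : ℕ)).card = (x : ℕ) := initSeg_card (le_of_lt x.2)
      rw [hT, hx2] at hcard
      omega
    have hm : (m : ℕ) - ((m : ℕ) - (x : ℕ)) < n := by omega
    have hmem := key ((m : ℕ) - (x : ℕ)) m hmT hm
    have heq : (⟨(m : ℕ) - ((m : ℕ) - (x : ℕ)), hm⟩ : Fin n) = x := by
      apply Fin.ext
      simp only
      omega
    rw [← heq]
    exact hmem
  exact (Finset.eq_of_subset_of_card_le hsub (by rw [hT, initSeg_card (k_le_n hT)])).symm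

end Base

lemma sign_shuffle_aux :
    ∀ s : ℕ, ∀ (T : Finset (Fin n)) (hT : T.card = k), (∑ i ∈ T, (i : ℕ)) = s →
      Equiv.Perm.sign (shuffle T hT) = (-1) ^ (s + ∑ i ∈ Finset.range k, i) := by
  intro s
  induction s using Nat.strong_induction_on with
  | _ s IH =>
    intro T hT hsum
    by_cases H : ∃ t ∈ T, ∃ (h0 : 0 < (t : ℕ)), t' t h0 ∉ T
    · obtain ⟨t, ht, h0, hpred⟩ := H
      have hstep := shuffle_step (h0 := h0) hT ht hpred
      have hsum' := stepSet_sum (h0 := h0) ht hpred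
      have hlt : (∑ i ∈ stepSet T t h0, (i : ℕ)) < s := by omega
      have hIH := IH _ hlt (stepSet T t h0) (stepSet_card hT ht hpred) rfl
      rw [hstep, map_mul, Equiv.Perm.sign_swap (t'_ne t h0)] at hIH
      have : Equiv.Perm.sign (shuffle T hT) =
          -((-1 : ℤˣ) ^ ((∑ i ∈ stepSet T t h0, (i : ℕ)) + ∑ i ∈ Finset.range k, i)) := by
        rw [← hIH, neg_mul, one_mul, neg_neg]
      rw [this]
      have hexp : s + ∑ i ∈ Finset.range k, i =
          ((∑ i ∈ stepSet T t h0, (i : ℕ)) + ∑ i ∈ Finset.range k, i) + 1 := by omega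
      rw [hexp, pow_succ, mul_neg_one]
    · push_neg at H
      have hTeq : T = initSeg n k := eq_initSeg hT H
      subst hTeq
      rw [shuffle_initSeg (k_le_n hT)]
      have : s = ∑ i ∈ Finset.range k, i := by
        rw [← hsum, initSeg_sum (k_le_n hT)]
      rw [this, map_one]
      exact (Even.neg_one_pow ⟨_, rfl⟩).symm

lemma sign_shuffle (T : Finset (Fin n)) (hT : T.card = k) :
    Equiv.Perm.sign (shuffle T hT) =
      (-1) ^ ((∑ i ∈ T, (i : ℕ)) + ∑ i ∈ Finset.range k, i) :=
  sign_shuffle_aux _ T hT rfl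


section Big

variable (S T : Finset (Fin n)) (hS : S.card = k) (hT : T.card = k)
  (π : Equiv.Perm (Fin k)) (ρ : Equiv.Perm (Fin (n - k)))

/-- The permutation of `Fin n` associated to `(T, π, ρ)` in the Laplace grouping. -/
noncomputable def bigPerm : Equiv.Perm (Fin n) :=
  (sumEquiv S hS).symm.trans ((Equiv.sumCongr π ρ).trans (sumEquiv T hT))

lemma sumEquiv_symm_inl (i : Fin k) :
    (sumEquiv S hS).symm (S.orderEmbOfFin hS i) = Sum.inl i := by
  rw [Equiv.symm_apply_eq]; rfl

lemma sumEquiv_symm_inr (h2 : Sᶜ.card = n - k) (i : Fin (n - k)) :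
    (sumEquiv S hS).symm (Sᶜ.orderEmbOfFin h2 i) = Sum.inr i := by
  rw [Equiv.symm_apply_eq]; rfl

lemma bigPerm_apply_left (i : Fin k) :
    bigPerm S T hS hT π ρ (S.orderEmbOfFin hS i) = T.orderEmbOfFin hT (π i) := by
  simp only [bigPerm, Equiv.trans_apply, sumEquiv_symm_inl, Equiv.sumCongr_apply, Sum.map_inl]
  rfl

lemma bigPerm_apply_right (h2 : Sᶜ.card = n - k) (h3 : Tᶜ.card = n - k) (j : Fin (n - k)) :
    bigPerm S T hS hT π ρ (Sᶜ.orderEmbOfFin h2 j) = Tᶜ.orderEmbOfFin h3 (ρ j) := by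
  simp only [bigPerm, Equiv.trans_apply, sumEquiv_symm_inr, Equiv.sumCongr_apply, Sum.map_inr]
  rfl

lemma bigPerm_image : S.image (bigPerm S T hS hT π ρ) = T := by
  apply Finset.eq_of_subset_of_card_le
  · intro y hy
    rw [Finset.mem_image] at hy
    obtain ⟨x, hx, rfl⟩ := hy
    have : x ∈ Set.range (S.orderEmbOfFin hS) := by
      rw [Finset.range_orderEmbOfFin]; exact hx
    obtain ⟨i, rfl⟩ := this
    rw [bigPerm_apply_left]
    exact Finset.orderEmbOfFin_mem T hT (π i)
  · rw [Finset.card_image_of_injective _ (bigPerm S T hS hT π ρ).injective, hS, hT]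

lemma bigPerm_factor :
    bigPerm S T hS hT π ρ =
      shuffle T hT * ((pre (k_le_n hS)).symm.permCongr (Equiv.sumCongr π ρ)) *
        (shuffle S hS)⁻¹ := by
  ext x
  simp only [bigPerm, shuffle, Equiv.Perm.mul_apply, Equiv.Perm.inv_def,
    Equiv.trans_apply, Equiv.permCongr_apply, Equiv.symm_symm, Equiv.symm_trans_apply,
    Equiv.apply_symm_apply, Equiv.symm_apply_apply]

lemma sign_bigPerm :
    Equiv.Perm.sign (bigPerm S T hS hT π ρ) =
      Equiv.Perm.sign π * Equiv.Perm.sign ρ *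
        (-1) ^ ((∑ i ∈ T, (i : ℕ)) + ∑ j ∈ S, (j : ℕ)) := by
  rw [bigPerm_factor, map_mul, map_mul, map_inv, Equiv.Perm.sign_permCongr,
    Equiv.Perm.sign_sumCongr, sign_shuffle, sign_shuffle]
  set a := ∑ i ∈ T, (i : ℕ)
  set b := ∑ j ∈ S, (j : ℕ)
  set c := ∑ i ∈ Finset.range k, i
  have hinv : ((-1 : ℤˣ) ^ (b + c))⁻¹ = (-1 : ℤˣ) ^ (b + c) := by
    rw [← inv_pow]
    norm_num
  rw [hinv]
  have h2 : (-1 : ℤˣ) ^ (a + c) * (-1 : ℤˣ) ^ (b + c) = (-1) ^ (a + b) := by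
    rw [← pow_add]
    have he : a + c + (b + c) = (a + b) + 2 * c := by ring
    rw [he, pow_add, pow_mul]
    norm_num
  rw [mul_right_comm, h2, mul_comm]

end Big


open Equiv.Perm in
lemma per_term {R : Type*} [CommRing R] (B : Matrix (Fin n) (Fin n) R)
    (S T : Finset (Fin n)) (hS : S.card = k) (hT : T.card = k)
    (hS' : Sᶜ.card = n - k) (hT' : Tᶜ.card = n - k) :
    (∑ p : Equiv.Perm (Fin k) × Equiv.Perm (Fin (n - k)),
      ((Equiv.Perm.sign (bigPerm S T hS hT p.1 p.2) : ℤ) : R) *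
        ∏ i, B (bigPerm S T hS hT p.1 p.2 i) i) =
    (-1 : R) ^ ((∑ i ∈ T, (i : ℕ)) + ∑ j ∈ S, (j : ℕ)) *
      (B.submatrix (⇑(T.orderEmbOfFin hT)) (⇑(S.orderEmbOfFin hS))).det *
      (B.submatrix (⇑(Tᶜ.orderEmbOfFin hT')) (⇑(Sᶜ.orderEmbOfFin hS'))).det := by
  rw [Matrix.det_apply', Matrix.det_apply', mul_assoc, Finset.sum_mul_sum]
  simp only [Finset.mul_sum]
  rw [Fintype.sum_prod_type]
  refine Finset.sum_congr rfl fun π _ => Finset.sum_congr rfl fun ρ _ => ?_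
  have hprod : (∏ i, B (bigPerm S T hS hT π ρ i) i) =
      (∏ i : Fin k, B (T.orderEmbOfFin hT (π i)) (S.orderEmbOfFin hS i)) *
        ∏ j : Fin (n - k), B (Tᶜ.orderEmbOfFin hT' (ρ j)) (Sᶜ.orderEmbOfFin hS' j) := by
    rw [← Fintype.prod_equiv (sumEquiv S hS)
      (fun x => B (bigPerm S T hS hT π ρ (sumEquiv S hS x)) (sumEquiv S hS x))
      (fun i => B (bigPerm S T hS hT π ρ i) i) (fun x => rfl)]
    rw [Fintype.prod_sum_type]
    congr 1
    · refine Finset.prod_congr rfl fun i _ => ?_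
      rw [sumEquiv_inl, bigPerm_apply_left]
    · refine Finset.prod_congr rfl fun j _ => ?_
      rw [sumEquiv_inr, bigPerm_apply_right S T hS hT π ρ (card_compl' hS) hT']
  rw [hprod, sign_bigPerm]
  simp only [Matrix.submatrix_apply, Units.val_mul, Units.val_pow_eq_pow_val,
    Units.val_neg, Units.val_one, Int.cast_mul, Int.cast_pow, Int.cast_neg, Int.cast_one]
  ring

noncomputable def bigF (S : Finset (Fin n)) (hS : S.card = k) :
    (Σ _ : {x // x ∈ Finset.powersetCard k (Finset.univ : Finset (Fin n))},
      Equiv.Perm (Fin k) × Equiv.Perm (Fin (n - k))) → Equiv.Perm (Fin n) :=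
  fun x => bigPerm S x.1.1 hS (Finset.mem_powersetCard.mp x.1.2).2 x.2.1 x.2.2

lemma bigF_injective (S : Finset (Fin n)) (hS : S.card = k) :
    Function.Injective (bigF S hS) := by
  rintro ⟨⟨T1, hT1⟩, π1, ρ1⟩ ⟨⟨T2, hT2⟩, π2, ρ2⟩ h
  simp only [bigF] at h
  have hTT : T1 = T2 := by
    rw [← bigPerm_image S T1 hS (Finset.mem_powersetCard.mp hT1).2 π1 ρ1,
      ← bigPerm_image S T2 hS (Finset.mem_powersetCard.mp hT2).2 π2 ρ2, h]
  subst hTT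
  have hc : ∀ z, (Equiv.sumCongr π1 ρ1) z = (Equiv.sumCongr π2 ρ2) z := by
    intro z
    have h2 := DFunLike.congr_fun h ((sumEquiv S hS) z)
    simp only [bigPerm, Equiv.trans_apply, Equiv.symm_apply_apply] at h2
    exact (sumEquiv T1 (Finset.mem_powersetCard.mp hT1).2).injective h2
  have hπ : π1 = π2 := Equiv.ext fun i => by simpa using hc (Sum.inl i)
  have hρ : ρ1 = ρ2 := Equiv.ext fun j => by simpa using hc (Sum.inr j)
  subst hπ
  subst hρ
  rfl

lemma bigF_bijective (S : Finset (Fin n)) (hS : S.card = k) :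
    Function.Bijective (bigF S hS) := by
  rw [Fintype.bijective_iff_injective_and_card]
  refine ⟨bigF_injective S hS, ?_⟩
  rw [Fintype.card_sigma]
  simp only [Finset.sum_const, Finset.card_univ, smul_eq_mul, Fintype.card_prod,
    Fintype.card_perm, Fintype.card_coe, Finset.card_powersetCard, Finset.card_univ,
    Fintype.card_fin]
  rw [← Nat.choose_mul_factorial_mul_factorial (k_le_n hS), mul_assoc]

end LaplaceAux


/-- Generalized Laplace expansion: for an `n × n` matrix `B` over a commutative ring and a
set `S` of `k` column indices, `det B` is the signed sum over all `k`-element row sets `T` of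
`det B[T,S] · det B[Tᶜ,Sᶜ]`, where submatrices take rows/columns in increasing order. -/
theorem laplace_expansion {R : Type*} [CommRing R] {n k : ℕ}
    (B : Matrix (Fin n) (Fin n) R) (S : Finset (Fin n)) (hS : S.card = k) :
    B.det = ∑ T ∈ (Finset.powersetCard k (Finset.univ : Finset (Fin n))).attach,
      (-1 : R) ^ ((∑ i ∈ T.1, (i : ℕ)) + ∑ j ∈ S, (j : ℕ)) *
        (B.submatrix (⇑(T.1.orderEmbOfFin ((Finset.mem_powersetCard.mp T.2).2)))
          (⇑(S.orderEmbOfFin hS))).det *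
        (B.submatrix (⇑((T.1ᶜ).orderEmbOfFin
            (by rw [Finset.card_compl, (Finset.mem_powersetCard.mp T.2).2, Fintype.card_fin])))
          (⇑(Sᶜ.orderEmbOfFin
            (by rw [Finset.card_compl, hS, Fintype.card_fin])))).det := by
  classical
  have h1 : B.det = ∑ x : (Σ _ : {x // x ∈ Finset.powersetCard k (Finset.univ : Finset (Fin n))},
      Equiv.Perm (Fin k) × Equiv.Perm (Fin (n - k))),
      ((Equiv.Perm.sign (LaplaceAux.bigF S hS x) : ℤ) : R) *
        ∏ i, B (LaplaceAux.bigF S hS x i) i := by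
    rw [Matrix.det_apply']
    exact (Fintype.sum_bijective (LaplaceAux.bigF S hS) (LaplaceAux.bigF_bijective S hS) _ _
      (fun x => rfl)).symm
  rw [h1, ← Finset.univ_sigma_univ, Finset.sum_sigma, ← Finset.univ_eq_attach]
  refine Finset.sum_congr rfl fun T _ => ?_
  exact LaplaceAux.per_term B S T.1 hS (Finset.mem_powersetCard.mp T.2).2 _ _
end

section
/- Vanishing of GL(n,ℂ) characters at order-two elements: Let n ≥ 1, let k be an integer with 0 < k ≤ n/2, and let l = (l_1 > l_2 > … > l_n ≥ 0) be a strictly decreasing tuple of nonnegative integers. If the number of indices i with l_i even is strictly greater than n−k, then lim_{ε→0⁺} χ_l(C_{n−k,k}(ε)) = 0. -/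
open Filter Topology

/-- The Weyl character of `GL(n,ℂ)`: for `l = λ + ρ_n` strictly decreasing and a regular tuple
`t`, `χ_l(t) = det((t_j^{l_i})) / ∏_{i<j}(t_i − t_j)`. -/
noncomputable def chiGL {n : ℕ} (l : Fin n → ℕ) (t : Fin n → ℂ) : ℂ :=
  (Matrix.of fun i j : Fin n => t j ^ l i).det /
    ∏ i : Fin n, ∏ j ∈ Finset.Ioi i, (t i - t j)

/-- The regular tuple `C_{n−k,k}(ε) = (x_{n−k}(ε),…,x_1(ε),−x_k(ε),…,−x_1(ε))` with
`x_j(ε) = 1 + jε`, tending as `ε → 0⁺` to the order-two element with `n−k` entries `1`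
and `k` entries `−1`. -/
noncomputable def CnkEps (n k : ℕ) (ε : ℝ) : Fin n → ℂ := fun i =>
  if (i : ℕ) < n - k then 1 + ((n - k - (i : ℕ) : ℕ) : ℂ) * (ε : ℂ)
  else -(1 + ((n - (i : ℕ) : ℕ) : ℂ) * (ε : ℂ))

/-!
Write `C_{n−k,k}(ε)_j = σ_j (1 + c_j ε)` with signs `σ_j = ±1` and nodes `c_j` distinct within
each sign block. Replacing each column `s` by the divided difference, over the nodes, of the
columns of its block up to `s` multiplies the numerator by a nonzero constant and pulls a factor
`ε ^ d_s` out of column `s`, where `d_s` counts the earlier columns of the block; the denominator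
carries exactly the same power of `ε`. So `χ_l(C_{n−k,k}(ε))` extends continuously to `ε = 0`,
with value a nonzero multiple of `det (σ_s ^ l_i * choose l_i d_s)`. In a row with `l_i` even the
entries are `choose l_i d_s`, which depend on `s` only through `d_s < n − k`; more than `n − k`
such rows are linearly dependent, so the limit is `0`.
-/
open Finset Polynomial

namespace Lagrange

variable {F : Type*} [Field F] {ι : Type*} [DecidableEq ι] {s : Finset ι} {v : ι → F}

theorem sum_pow_mul_nodalWeight (hvs : Set.InjOn v s) {d m : ℕ} (hs : #s = d + 1)
    (hm : m ≤ d) : ∑ i ∈ s, v i ^ m * nodalWeight s v i = if m = d then 1 else 0 := by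
  have h := coeff_eq_sum hvs (P := X ^ m)
    (by rw [degree_X_pow, hs]; exact_mod_cast Nat.lt_succ_of_le hm)
  simp only [hs, Nat.add_sub_cancel, coeff_X_pow, eval_pow, eval_X] at h
  simp only [h, nodalWeight, prod_inv_distrib, div_eq_mul_inv, eq_comm]

theorem sum_one_add_mul_pow_mul_nodalWeight (hvs : Set.InjOn v s) {d : ℕ} (hs : #s = d + 1)
    (l : ℕ) (z : F) :
    ∑ i ∈ s, (1 + v i * z) ^ l * nodalWeight s v i =
      z ^ d * ∑ m ∈ Icc d l,
        l.choose m * (∑ i ∈ s, v i ^ m * nodalWeight s v i) * z ^ (m - d) := by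
  calc ∑ i ∈ s, (1 + v i * z) ^ l * nodalWeight s v i
      = ∑ m ∈ range (l + 1), l.choose m * (∑ i ∈ s, v i ^ m * nodalWeight s v i) * z ^ m := by
        simp_rw [add_comm (1 : F), add_pow, one_pow, mul_one, sum_mul, mul_sum]
        rw [sum_comm]
        refine sum_congr rfl fun m _ => ?_
        rw [sum_mul]
        exact sum_congr rfl fun i _ => by ring
    _ = ∑ m ∈ Icc d l, l.choose m * (∑ i ∈ s, v i ^ m * nodalWeight s v i) * z ^ m := by
        refine (sum_subset (fun m hm => ?_) fun m hm hm' => ?_).symm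
        · simp only [mem_Icc, mem_range] at hm ⊢; omega
        · simp only [mem_Icc, mem_range, not_and_or, not_le] at hm hm'
          rw [sum_pow_mul_nodalWeight hvs hs (by omega), if_neg (by omega)]
          ring
    _ = _ := by
        rw [mul_sum]
        refine sum_congr rfl fun m hm => ?_
        rw [← pow_mul_pow_sub z (mem_Icc.mp hm).1]
        ring

end Lagrange

theorem Matrix.det_eq_zero_of_rows_factor {K : Type*} [Field K] {ι κ : Type*} [Fintype ι]
    [DecidableEq ι] [Fintype κ] (M : Matrix ι ι K) (E : Finset ι) (hE : Fintype.card κ < #E)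
    (φ : ι → κ) (g : ι → κ → K) (hM : ∀ i ∈ E, ∀ s, M i s = g i (φ s)) : M.det = 0 := by
  by_contra hdet
  have hrows : LinearIndependent K (fun i : E => M i) :=
    (linearIndependent_rows_of_det_ne_zero hdet).comp _ Subtype.val_injective
  have hfactor : (fun i : E => M i) = LinearMap.funLeft K K φ ∘ fun i : E => g i := by
    ext i s
    exact hM i i.2 s
  have hg := (hfactor ▸ hrows).of_comp
  have := hg.fintype_card_le_finrank
  rw [Fintype.card_coe, Module.finrank_fintype_fun_eq_card] at this
  omega

section Blocks

variable {α : Type*} [DecidableEq α] {n : ℕ} {σ : Fin n → α}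

variable (σ) in
def blockIic (s : Fin n) : Finset (Fin n) := {j ∈ Iic s | σ j = σ s}

variable (σ) in
def blockRank (s : Fin n) : ℕ := #{j ∈ Iio s | σ j = σ s}

lemma card_blockIic (s : Fin n) : #(blockIic σ s) = blockRank σ s + 1 := by
  rw [blockIic, blockRank, ← Iio_insert, filter_insert, if_pos rfl,
    card_insert_of_notMem (by simp)]

lemma injOn_blockIic {β : Type*} {c : Fin n → β} (hc : Function.Injective fun i => (σ i, c i))
    (s : Fin n) : Set.InjOn c (blockIic σ s) := fun i hi j hj hij => by
  simp only [blockIic, coe_filter, Set.mem_ofPred_eq] at hi hj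
  exact hc (Prod.ext (hi.2.trans hj.2.symm) hij)

end Blocks

section ConfluentTuple

variable {K : Type*} [Field K] [DecidableEq K] {n : ℕ} (σ c : Fin n → K)

def confluentTuple (z : K) (j : Fin n) : K := σ j * (1 + c j * z)

/-- Right multiplication by this matrix replaces column `s` by the divided difference, over the
nodes `c j`, of the columns `j ∈ blockIic σ s`. -/
def lagrangeMatrix : Matrix (Fin n) (Fin n) K :=
  Matrix.of fun j s => if j ∈ blockIic σ s then Lagrange.nodalWeight (blockIic σ s) c j else 0

def reducedPowMatrix (l : Fin n → ℕ) (z : K) : Matrix (Fin n) (Fin n) K :=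
  Matrix.of fun i s => σ s ^ l i * ∑ m ∈ Icc (blockRank σ s) (l i),
    (l i).choose m * (∑ j ∈ blockIic σ s, c j ^ m * Lagrange.nodalWeight (blockIic σ s) c j) *
      z ^ (m - blockRank σ s)

def reducedDiff (z : K) (i j : Fin n) : K :=
  if σ i = σ j then σ i * (c i - c j) else confluentTuple σ c z i - confluentTuple σ c z j

variable {σ c}

lemma blockTriangular_lagrangeMatrix : (lagrangeMatrix σ c).BlockTriangular id := by
  intro j s hsj
  have : j ∉ blockIic σ s := by simp [blockIic, not_le.mpr (show s < j from hsj)]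
  simp [lagrangeMatrix, this]

lemma det_lagrangeMatrix_ne_zero (hc : Function.Injective fun i => (σ i, c i)) :
    (lagrangeMatrix σ c).det ≠ 0 := by
  rw [Matrix.det_of_isUpperTriangular blockTriangular_lagrangeMatrix, prod_ne_zero_iff]
  intro s _
  have hs : s ∈ blockIic σ s := by simp [blockIic]
  simp only [lagrangeMatrix, Matrix.of_apply, if_pos hs]
  exact Lagrange.nodalWeight_ne_zero (injOn_blockIic hc s) hs

lemma powMatrix_mul_lagrangeMatrix (hc : Function.Injective fun i => (σ i, c i))
    (l : Fin n → ℕ) (z : K) :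
    Matrix.of (fun i j => confluentTuple σ c z j ^ l i) * lagrangeMatrix σ c =
      reducedPowMatrix σ c l z * Matrix.diagonal fun s => z ^ blockRank σ s := by
  ext i s
  have hσ : ∀ j ∈ blockIic σ s, σ j = σ s := fun j hj => (mem_filter.mp hj).2
  rw [Matrix.mul_diagonal, Matrix.mul_apply]
  simp only [Matrix.of_apply, lagrangeMatrix, mul_ite, mul_zero, sum_ite_mem, univ_inter,
    reducedPowMatrix, confluentTuple, mul_pow]
  rw [sum_congr rfl fun j hj => by rw [hσ j hj, mul_assoc], ← mul_sum,
    Lagrange.sum_one_add_mul_pow_mul_nodalWeight (injOn_blockIic hc s) (card_blockIic s)]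
  ring

lemma confluentTuple_sub (z : K) (i j : Fin n) :
    confluentTuple σ c z i - confluentTuple σ c z j =
      (if σ i = σ j then z else 1) * reducedDiff σ c z i j := by
  unfold reducedDiff confluentTuple
  split_ifs with h
  · rw [h]; ring
  · rw [one_mul]

lemma prod_confluentTuple_sub (z : K) :
    ∏ i, ∏ j ∈ Ioi i, (confluentTuple σ c z i - confluentTuple σ c z j) =
      z ^ (∑ s, blockRank σ s) * ∏ i, ∏ j ∈ Ioi i, reducedDiff σ c z i j := by
  simp_rw [confluentTuple_sub, prod_mul_distrib]
  congr 1
  rw [prod_comm' (t' := univ) (s' := fun j => Iio j) (by simp), ← prod_pow_eq_pow_sum]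
  refine prod_congr rfl fun s _ => ?_
  rw [prod_ite, prod_const_one, mul_one, prod_const, blockRank]

lemma reducedDiff_zero_ne_zero (hσ : ∀ i, σ i ≠ 0) (hc : Function.Injective fun i => (σ i, c i))
    {i j : Fin n} (hij : i ≠ j) : reducedDiff σ c 0 i j ≠ 0 := by
  unfold reducedDiff confluentTuple
  split_ifs with h
  · exact mul_ne_zero (hσ i) (sub_ne_zero.mpr fun hcij => hij (hc (Prod.ext h hcij)))
  · simpa [sub_eq_zero] using h

lemma det_powMatrix_mul_det_lagrangeMatrix (hc : Function.Injective fun i => (σ i, c i))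
    (l : Fin n → ℕ) (z : K) :
    (Matrix.of fun i j => confluentTuple σ c z j ^ l i).det * (lagrangeMatrix σ c).det =
      (reducedPowMatrix σ c l z).det * z ^ (∑ s, blockRank σ s) := by
  rw [← Matrix.det_mul, powMatrix_mul_lagrangeMatrix hc, Matrix.det_mul, Matrix.det_diagonal,
    prod_pow_eq_pow_sum]

lemma reducedPowMatrix_zero (hc : Function.Injective fun i => (σ i, c i)) (l : Fin n → ℕ) :
    reducedPowMatrix σ c l 0 = Matrix.of fun i s => σ s ^ l i * (l i).choose (blockRank σ s) := by
  ext i s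
  simp only [reducedPowMatrix, Matrix.of_apply]
  congr 1
  rcases le_or_gt (blockRank σ s) (l i) with h | h
  · rw [sum_eq_single_of_mem _ (mem_Icc.mpr ⟨le_rfl, h⟩) fun m hm hne => ?_]
    · rw [Lagrange.sum_pow_mul_nodalWeight (injOn_blockIic hc s) (card_blockIic s) le_rfl]
      simp
    · rw [zero_pow (by have := (mem_Icc.mp hm).1; omega), mul_zero]
  · rw [Icc_eq_empty_of_lt h, sum_empty, Nat.choose_eq_zero_of_lt h, Nat.cast_zero]

end ConfluentTuple

section Limit

variable {n : ℕ} {σ c : Fin n → ℂ}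

lemma continuous_det_reducedPowMatrix (l : Fin n → ℕ) :
    Continuous fun z => (reducedPowMatrix σ c l z).det :=
  Continuous.matrix_det <| continuous_matrix fun i s => by
    simp only [reducedPowMatrix, Matrix.of_apply]
    fun_prop

lemma continuous_reducedDiff (i j : Fin n) : Continuous fun z => reducedDiff σ c z i j := by
  unfold reducedDiff confluentTuple
  split_ifs <;> fun_prop

lemma chiGL_confluentTuple (hc : Function.Injective fun i => (σ i, c i)) (l : Fin n → ℕ)
    {z : ℂ} (hz : z ≠ 0) :
    chiGL l (confluentTuple σ c z) = (reducedPowMatrix σ c l z).det /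
      ((lagrangeMatrix σ c).det * ∏ i, ∏ j ∈ Ioi i, reducedDiff σ c z i j) := by
  rw [chiGL, prod_confluentTuple_sub, eq_div_of_mul_eq (det_lagrangeMatrix_ne_zero hc)
    (det_powMatrix_mul_det_lagrangeMatrix hc l z), div_div, mul_left_comm, mul_comm _ (z ^ _),
    mul_div_mul_left _ _ (pow_ne_zero _ hz)]

theorem tendsto_chiGL_confluentTuple (hσ : ∀ i, σ i ≠ 0)
    (hc : Function.Injective fun i => (σ i, c i)) (l : Fin n → ℕ) :
    Tendsto (fun z => chiGL l (confluentTuple σ c z)) (𝓝[≠] 0)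
      (𝓝 ((Matrix.of fun i s => σ s ^ l i * ((l i).choose (blockRank σ s) : ℂ)).det /
        ((lagrangeMatrix σ c).det * ∏ i, ∏ j ∈ Ioi i, reducedDiff σ c 0 i j))) := by
  have hW : ∏ i, ∏ j ∈ Ioi i, reducedDiff σ c 0 i j ≠ 0 :=
    prod_ne_zero_iff.mpr fun i _ => prod_ne_zero_iff.mpr fun j hj =>
      reducedDiff_zero_ne_zero hσ hc (mem_Ioi.mp hj).ne
  have hcont : ContinuousAt (fun z => (reducedPowMatrix σ c l z).det /
      ((lagrangeMatrix σ c).det * ∏ i, ∏ j ∈ Ioi i, reducedDiff σ c z i j)) 0 := by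
    refine (continuous_det_reducedPowMatrix l).continuousAt.div
      (continuousAt_const.mul ?_) (mul_ne_zero (det_lagrangeMatrix_ne_zero hc) hW)
    exact (continuous_finsetProd _ fun i _ => continuous_finsetProd _ fun j _ =>
      continuous_reducedDiff i j).continuousAt
  rw [← reducedPowMatrix_zero hc]
  exact (hcont.tendsto.mono_left nhdsWithin_le_nhds).congr'
    (eventually_mem_nhdsWithin.mono fun z hz => (chiGL_confluentTuple hc l hz).symm)

end Limit

section OrderTwo

variable {n k : ℕ}

variable (n k) in
def cnkSign (i : Fin n) : ℂ := if (i : ℕ) < n - k then 1 else -1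

variable (n k) in
def cnkNode (i : Fin n) : ℂ := ((if (i : ℕ) < n - k then n - k - i else n - i : ℕ) : ℂ)

lemma cnkEps_eq_confluentTuple (ε : ℝ) :
    CnkEps n k ε = confluentTuple (cnkSign n k) (cnkNode n k) ε := by
  funext i
  unfold CnkEps confluentTuple cnkSign cnkNode
  split_ifs <;> ring

lemma cnkSign_ne_zero (i : Fin n) : cnkSign n k i ≠ 0 := by
  unfold cnkSign
  split_ifs <;> norm_num

lemma cnkSign_pow_of_even {m : ℕ} (hm : Even m) (i : Fin n) : cnkSign n k i ^ m = 1 := by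
  unfold cnkSign
  split_ifs
  exacts [one_pow m, hm.neg_one_pow]

lemma injective_cnkSign_cnkNode : Function.Injective fun i => (cnkSign n k i, cnkNode n k i) := by
  intro i j hij
  obtain ⟨hσ, hc⟩ := Prod.mk.inj hij
  unfold cnkSign at hσ
  unfold cnkNode at hc
  rw [Nat.cast_inj] at hc
  ext
  split_ifs at hσ hc <;> norm_num at hσ <;> omega

lemma blockRank_cnkSign_lt (hk2 : 2 * k ≤ n) (s : Fin n) :
    blockRank (cnkSign n k) s < n - k := by
  have hmaps : ∀ j ∈ ({j ∈ Iio s | cnkSign n k j = cnkSign n k s} : Finset (Fin n)),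
      (j : ℕ) ∈ Ico (if (s : ℕ) < n - k then 0 else n - k) s := by
    intro j hj
    rw [mem_filter, mem_Iio, Fin.lt_def] at hj
    obtain ⟨hjs, hσ⟩ := hj
    unfold cnkSign at hσ
    rw [mem_Ico]
    split_ifs at hσ ⊢ <;> norm_num at hσ <;> omega
  refine (card_le_card_of_injOn _ hmaps Fin.val_injective.injOn).trans_lt ?_
  have := s.isLt
  rw [Nat.card_Ico]
  split_ifs <;> omega

lemma det_choose_cnkSign_eq_zero (hk2 : 2 * k ≤ n) (l : Fin n → ℕ)
    (h : n - k < #{i | Even (l i)}) :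
    (Matrix.of fun i s => cnkSign n k s ^ l i *
      ((l i).choose (blockRank (cnkSign n k) s) : ℂ)).det = 0 :=
  Matrix.det_eq_zero_of_rows_factor _ {i | Even (l i)} (by simpa using h)
    (fun s => (⟨blockRank (cnkSign n k) s, blockRank_cnkSign_lt hk2 s⟩ : Fin (n - k)))
    (fun i m => ((l i).choose m : ℂ))
    fun i hi s => by simp [cnkSign_pow_of_even (mem_filter.mp hi).2]

end OrderTwo

theorem glVanishing_general (n k : ℕ) (hk2 : 2 * k ≤ n)
    (l : Fin n → ℕ)
    (h : n - k < (Finset.univ.filter fun i => Even (l i)).card) :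
    Tendsto (fun ε : ℝ => chiGL l (CnkEps n k ε)) (𝓝[>] 0) (𝓝 0) := by
  have hofReal : Tendsto (fun ε : ℝ => (ε : ℂ)) (𝓝[>] 0) (𝓝[≠] 0) := by
    simpa using Complex.continuous_ofReal.continuousWithinAt.tendsto_nhdsWithin (x := 0)
      (s := Set.Ioi 0) (t := {0}ᶜ) fun ε (hε : 0 < ε) => by simpa using hε.ne'
  have hlim := (tendsto_chiGL_confluentTuple (cnkSign_ne_zero (k := k))
    injective_cnkSign_cnkNode l).comp hofReal
  rw [det_choose_cnkSign_eq_zero hk2 l h, zero_div] at hlim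
  simpa only [Function.comp_def, cnkEps_eq_confluentTuple] using hlim

/-- Vanishing of `GL(n,ℂ)` characters at order-two elements: if the number of even entries of
`l` exceeds `n − k`, then `lim_{ε→0⁺} χ_l(C_{n−k,k}(ε)) = 0`. -/
theorem glVanishing (n k : ℕ) (hn : 1 ≤ n) (hk : 0 < k) (hk2 : 2 * k ≤ n)
    (l : Fin n → ℕ) (hl : StrictAnti l)
    (h : n - k < (Finset.univ.filter fun i => Even (l i)).card) :
    Tendsto (fun ε : ℝ => chiGL l (CnkEps n k ε)) (𝓝[>] 0) (𝓝 0) :=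
  glVanishing_general n k hk2 l h
end

section
/- Vanishing of Sp(2n,ℂ) characters at order-two elements: Let n ≥ 1, let k be an integer with 0 < k ≤ n/2, and let l = (l_1 > … > l_n ≥ 1) be a strictly decreasing tuple of positive integers. If the number of even entries of l is strictly greater than n−k, or the number of odd entries of l is strictly greater than n−k, then lim_{ε→0⁺} χ^C_l(C_{n−k,k}(ε)) = 0. -/
open Filter Topology

/-- The Weyl character of `Sp(2n,ℂ)`: for `l = λ + ρ^n` strictly decreasing and a regular tuple
`t`, `χ^C_l(t) = det((t_j^{l_i} − t_j^{−l_i})) / det((t_j^{n+1−i} − t_j^{−(n+1−i)}))`. -/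
noncomputable def chiSp {n : ℕ} (l : Fin n → ℕ) (t : Fin n → ℂ) : ℂ :=
  (Matrix.of fun i j : Fin n => t j ^ (l i : ℤ) - t j ^ (-(l i : ℤ))).det /
    (Matrix.of fun i j : Fin n =>
      t j ^ ((n : ℤ) - (i : ℕ)) - t j ^ (-((n : ℤ) - (i : ℕ)))).det

/-- If more than `n - k` rows of `M` satisfy the (anti)symmetry
`M i j = s * M i (j - k)` for all columns `j ≥ n - k`, then `det M = 0`. -/
lemma det_eq_zero_of_sym {n k : ℕ} (hk : 0 < k) (hk2 : 2 * k ≤ n)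
    (M : Matrix (Fin n) (Fin n) ℂ) (s : ℂ) (S : Finset (Fin n)) (hcard : n - k < S.card)
    (hrow : ∀ i ∈ S, ∀ j : Fin n, n - k ≤ (j : ℕ) →
      M i j = s * M i ⟨(j : ℕ) - k, by omega⟩) : M.det = 0 := by
  by_contra hdet
  have hunit : IsUnit M := (Matrix.isUnit_iff_isUnit_det M).mpr (Ne.isUnit hdet)
  have hLI : LinearIndependent ℂ (fun i => M i) :=
    Matrix.linearIndependent_rows_iff_isUnit.mpr hunit
  have hLI2 : LinearIndependent ℂ (fun i : S => M i) :=
    hLI.comp _ Subtype.val_injective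
  have hnk : n - k ≤ n := Nat.sub_le n k
  set v : S → (Fin (n - k) → ℂ) := fun i j => M i (Fin.castLE hnk j) with hv
  have hLI3 : LinearIndependent ℂ v := by
    rw [Fintype.linearIndependent_iff] at hLI2 ⊢
    intro g hg
    have h0 : ∀ j : Fin n, (j : ℕ) < n - k → (∑ i : S, g i * M i j) = 0 := by
      intro j hj
      have := congrFun hg ⟨(j : ℕ), hj⟩
      simpa [v, Finset.sum_apply, Fin.ext_iff] using this
    apply hLI2
    funext j
    simp only [Finset.sum_apply, Pi.smul_apply, smul_eq_mul, Pi.zero_apply]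
    rcases lt_or_ge (j : ℕ) (n - k) with hj | hj
    · exact h0 j hj
    · have hjk : (j : ℕ) - k < n - k := by omega
      calc (∑ i : S, g i * M i j)
          = ∑ i : S, g i * (s * M i ⟨(j : ℕ) - k, by omega⟩) := by
            refine Finset.sum_congr rfl fun i _ => ?_
            rw [hrow i i.2 j hj]
        _ = s * ∑ i : S, g i * M i ⟨(j : ℕ) - k, by omega⟩ := by
            rw [Finset.mul_sum]
            exact Finset.sum_congr rfl fun i _ => by ring
        _ = 0 := by rw [h0 ⟨(j : ℕ) - k, by omega⟩ hjk, mul_zero]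
  have hle := hLI3.fintype_card_le_finrank
  rw [Module.finrank_pi] at hle
  simp [Fintype.card_coe] at hle
  omega

lemma chiSp_eq_zero (n k : ℕ) (hk : 0 < k) (hk2 : 2 * k ≤ n)
    (l : Fin n → ℕ)
    (h : n - k < (Finset.univ.filter fun i => Even (l i)).card ∨
      n - k < (Finset.univ.filter fun i => Odd (l i)).card) (ε : ℝ) :
    chiSp l (CnkEps n k ε) = 0 := by
  set t := CnkEps n k ε with ht
  have key : ∀ i : Fin n, ∀ j : Fin n, n - k ≤ (j : ℕ) →
      t j ^ (l i : ℤ) - t j ^ (-(l i : ℤ)) =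
        (-1 : ℂ) ^ (l i) *
          (t ⟨(j : ℕ) - k, by omega⟩ ^ (l i : ℤ) - t ⟨(j : ℕ) - k, by omega⟩ ^ (-(l i : ℤ))) := by
    intro i j hj
    have hjn : (j : ℕ) < n := j.2
    have hjk : (j : ℕ) - k < n - k := by omega
    have heq : n - k - ((j : ℕ) - k) = n - (j : ℕ) := by omega
    have htj : t j = -(t ⟨(j : ℕ) - k, by omega⟩) := by
      simp only [ht, CnkEps]
      rw [if_neg (by omega), if_pos (by simpa using hjk)]
      rw [heq]
    set x : ℂ := t ⟨(j : ℕ) - k, by omega⟩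
    rw [htj]
    rw [zpow_neg, zpow_natCast, zpow_neg, zpow_natCast, neg_pow x (l i)]
    rw [mul_inv, mul_sub]
    have : ((-1 : ℂ) ^ l i)⁻¹ = (-1 : ℂ) ^ l i := by
      rcases Nat.even_or_odd (l i) with he | ho
      · rw [he.neg_one_pow]; norm_num
      · rw [ho.neg_one_pow]; norm_num
    rw [this]
  rcases h with h | h
  · have hdet : (Matrix.of fun i j : Fin n =>
        t j ^ (l i : ℤ) - t j ^ (-(l i : ℤ))).det = 0 := by
      apply det_eq_zero_of_sym hk hk2 _ 1 (Finset.univ.filter fun i => Even (l i)) h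
      intro i hi j hj
      have hev : Even (l i) := (Finset.mem_filter.mp hi).2
      simp only [Matrix.of_apply]
      rw [key i j hj, hev.neg_one_pow, one_mul]
    rw [chiSp, hdet, zero_div]
  · have hdet : (Matrix.of fun i j : Fin n =>
        t j ^ (l i : ℤ) - t j ^ (-(l i : ℤ))).det = 0 := by
      apply det_eq_zero_of_sym hk hk2 _ (-1) (Finset.univ.filter fun i => Odd (l i)) h
      intro i hi j hj
      have hod : Odd (l i) := (Finset.mem_filter.mp hi).2
      simp only [Matrix.of_apply]
      rw [key i j hj, hod.neg_one_pow]
    rw [chiSp, hdet, zero_div]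

/-- Vanishing of `Sp(2n,ℂ)` characters at order-two elements: if the number of even entries of
`l` or the number of odd entries of `l` exceeds `n − k`, then
`lim_{ε→0⁺} χ^C_l(C_{n−k,k}(ε)) = 0`. -/
theorem spVanishing (n k : ℕ) (hn : 1 ≤ n) (hk : 0 < k) (hk2 : 2 * k ≤ n)
    (l : Fin n → ℕ) (hl : StrictAnti l) (hl1 : ∀ i, 1 ≤ l i)
    (h : n - k < (Finset.univ.filter fun i => Even (l i)).card ∨
      n - k < (Finset.univ.filter fun i => Odd (l i)).card) :
    Tendsto (fun ε : ℝ => chiSp l (CnkEps n k ε)) (𝓝[>] 0) (𝓝 0) := by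
  have : (fun ε : ℝ => chiSp l (CnkEps n k ε)) = fun _ => (0 : ℂ) :=
    funext fun ε => chiSp_eq_zero n k hk hk2 l h ε
  rw [this]
  exact tendsto_const_nhds
end

section
/- Vanishing of SO(2n,ℂ) characters at order-two elements: Let n ≥ 2, let k be an integer with 0 < k ≤ n/2, and let l = (l_1 > … > l_n ≥ 0) be a strictly decreasing tuple of nonnegative integers. If the number of even entries of l is strictly greater than n−k, or the number of odd entries of l is strictly greater than n−k, then lim_{ε→0⁺} χ^D_l(C_{n−k,k}(ε)) = 0. -/
open Filter Topology

/-- The Weyl character of `SO(2n,ℂ)`: for `l = λ + ρ̄_{2n}` strictly decreasing and a regular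
tuple `t`, `χ^D_l(t) = [det((t_j^{l_i} − t_j^{−l_i})) + det((t_j^{l_i} + t_j^{−l_i}))] /
[det((t_j^{n−i} − t_j^{−(n−i)})) + det((t_j^{n−i} + t_j^{−(n−i)}))]`. -/
noncomputable def chiSO {n : ℕ} (l : Fin n → ℕ) (t : Fin n → ℂ) : ℂ :=
  ((Matrix.of fun i j : Fin n => t j ^ (l i : ℤ) - t j ^ (-(l i : ℤ))).det +
      (Matrix.of fun i j : Fin n => t j ^ (l i : ℤ) + t j ^ (-(l i : ℤ))).det) /
    ((Matrix.of fun i j : Fin n =>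
        t j ^ ((n : ℤ) - 1 - (i : ℕ)) - t j ^ (-((n : ℤ) - 1 - (i : ℕ)))).det +
      (Matrix.of fun i j : Fin n =>
        t j ^ ((n : ℤ) - 1 - (i : ℕ)) + t j ^ (-((n : ℤ) - 1 - (i : ℕ)))).det)

/-- If a square matrix over `ℂ` has `k` pairs of columns `(p m, q m)` such that column `q m`
agrees with `± s` times column `p m` (sign depending on whether the row lies in a set `S` of
cardinality `< k`), then its determinant vanishes. -/
lemma det_eq_zero_of_pairs {n k : ℕ} (M : Matrix (Fin n) (Fin n) ℂ)
    (p q : Fin k → Fin n) (hp : Function.Injective p)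
    (hpq : ∀ m m' : Fin k, p m ≠ q m')
    (S : Finset (Fin n)) (hS : S.card < k) (s : ℂ) (hs : s * s = 1)
    (hrel : ∀ (m : Fin k) (i : Fin n), M i (q m) = (if i ∈ S then s else -s) * M i (p m)) :
    M.det = 0 := by
  rw [← Matrix.exists_mulVec_eq_zero_iff]
  have hni : ¬ LinearIndependent ℂ (fun m : Fin k => fun i : S => M i (p m)) := by
    intro hli
    have h1 := hli.fintype_card_le_finrank
    rw [Module.finrank_fintype_fun_eq_card, Fintype.card_coe, Fintype.card_fin] at h1
    omega
  obtain ⟨c, hc0, m₀, hm₀⟩ := Fintype.not_linearIndependent_iff.mp hni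
  refine ⟨fun j => ∑ m, c m * ((if j = p m then 1 else 0) + s * (if j = q m then 1 else 0)),
    ?_, ?_⟩
  · intro hv
    apply hm₀
    have hval : (∑ m, c m * ((if p m₀ = p m then (1:ℂ) else 0) +
        s * (if p m₀ = q m then 1 else 0))) = c m₀ := by
      rw [Finset.sum_eq_single m₀]
      · rw [if_pos rfl, if_neg (hpq m₀ m₀)]; ring
      · intro m _ hm
        rw [if_neg (fun h => hm (hp h).symm), if_neg (hpq m₀ m)]; ring
      · intro hmem; exact absurd (Finset.mem_univ m₀) hmem
    have := congrFun hv (p m₀)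
    simp only [Pi.zero_apply] at this
    rw [this] at hval
    exact hval.symm
  · funext i
    have step : M.mulVec (fun j => ∑ m, c m * ((if j = p m then (1:ℂ) else 0) +
        s * (if j = q m then 1 else 0))) i
        = ∑ m, c m * (M i (p m) + s * M i (q m)) := by
      simp only [Matrix.mulVec, dotProduct, Finset.mul_sum]
      rw [Finset.sum_comm]
      refine Finset.sum_congr rfl fun m _ => ?_
      have e1 : (∑ j, M i j * (c m * ((if j = p m then (1:ℂ) else 0) +
          s * (if j = q m then 1 else 0))))
          = (∑ j, (if j = p m then c m * M i j else 0))
            + (∑ j, (if j = q m then c m * s * M i j else 0)) := by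
        rw [← Finset.sum_add_distrib]
        refine Finset.sum_congr rfl fun j _ => ?_
        by_cases h1 : j = p m
        · have h2 : ¬ j = q m := fun h2 => hpq m m (h1.symm.trans h2)
          rw [if_pos h1, if_pos h1, if_neg h2, if_neg h2]; ring
        · by_cases h2 : j = q m
          · rw [if_neg h1, if_neg h1, if_pos h2, if_pos h2]; ring
          · rw [if_neg h1, if_neg h1, if_neg h2, if_neg h2]; ring
      rw [e1, Finset.sum_ite_eq' Finset.univ (p m) (fun j => c m * M i j),
        Finset.sum_ite_eq' Finset.univ (q m) (fun j => c m * s * M i j)]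
      simp only [Finset.mem_univ, if_true]
      ring
    rw [step]
    by_cases hi : i ∈ S
    · have hrel' : ∀ m, M i (q m) = s * M i (p m) := fun m => by rw [hrel m i, if_pos hi]
      have hzero : (∑ m, c m * M i (p m)) = 0 := by
        have := congrFun hc0 (⟨i, hi⟩ : S)
        simpa [Finset.sum_apply] using this
      calc (∑ m, c m * (M i (p m) + s * M i (q m)))
          = ∑ m, (1 + s * s) * (c m * M i (p m)) := by
            refine Finset.sum_congr rfl fun m _ => ?_
            rw [hrel' m]; ring
        _ = (1 + s * s) * ∑ m, c m * M i (p m) := by rw [Finset.mul_sum]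
        _ = 0 := by rw [hzero, mul_zero]
    · have hrel' : ∀ m, M i (q m) = -s * M i (p m) := fun m => by rw [hrel m i, if_neg hi]
      calc (∑ m, c m * (M i (p m) + s * M i (q m)))
          = ∑ m, (1 - s * s) * (c m * M i (p m)) := by
            refine Finset.sum_congr rfl fun m _ => ?_
            rw [hrel' m]; ring
        _ = 0 := by
            rw [hs]
            simp

/-- Vanishing of `SO(2n,ℂ)` characters at order-two elements: if the number of even entries of
`l` or the number of odd entries of `l` exceeds `n − k`, then
`lim_{ε→0⁺} χ^D_l(C_{n−k,k}(ε)) = 0`. -/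
theorem soEvenVanishing (n k : ℕ) (hn : 2 ≤ n) (hk : 0 < k) (hk2 : 2 * k ≤ n)
    (l : Fin n → ℕ) (hl : StrictAnti l)
    (h : n - k < (Finset.univ.filter fun i => Even (l i)).card ∨
      n - k < (Finset.univ.filter fun i => Odd (l i)).card) :
    Tendsto (fun ε : ℝ => chiSO l (CnkEps n k ε)) (𝓝[>] 0) (𝓝 0) := by
  have key : ∀ ε : ℝ, chiSO l (CnkEps n k ε) = 0 := by
    intro ε
    set t : Fin n → ℂ := CnkEps n k ε with ht
    -- the paired columns
    have hpq0 : ∀ m : Fin k, (m : ℕ) < k := fun m => m.isLt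
    set p : Fin k → Fin n := fun m => ⟨n - k - 1 - (m : ℕ), by have := m.isLt; omega⟩ with hpdef
    set q : Fin k → Fin n := fun m => ⟨n - 1 - (m : ℕ), by have := m.isLt; omega⟩ with hqdef
    have hp : Function.Injective p := by
      intro a b hab
      have ha := a.isLt; have hb := b.isLt
      have h1 : n - k - 1 - (a : ℕ) = n - k - 1 - (b : ℕ) := congrArg Fin.val hab
      exact Fin.ext (by omega)
    have hpq : ∀ m m' : Fin k, p m ≠ q m' := by
      intro m m' hc
      have hm := m.isLt; have hm' := m'.isLt
      have h1 : n - k - 1 - (m : ℕ) = n - 1 - (m' : ℕ) := congrArg Fin.val hc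
      omega
    have htq : ∀ m : Fin k, t (q m) = - t (p m) := by
      intro m
      have hm := m.isLt
      have hqv : ((q m : Fin n) : ℕ) = n - 1 - (m : ℕ) := rfl
      have hpv : ((p m : Fin n) : ℕ) = n - k - 1 - (m : ℕ) := rfl
      rw [ht]
      simp only [CnkEps, hqv, hpv]
      rw [if_neg (by omega), if_pos (by omega)]
      have e1 : n - (n - 1 - (m : ℕ)) = n - k - (n - k - 1 - (m : ℕ)) := by omega
      rw [e1]
    -- the parity set
    obtain hcase | hcase := h
    · -- more than n-k even entries : use S = odd rows, s = -1
      set S : Finset (Fin n) := Finset.univ.filter (fun i => Odd (l i)) with hSdef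
      have hScard : S.card < k := by
        have hfe : (Finset.univ.filter fun i : Fin n => Odd (l i)) =
            (Finset.univ.filter fun i : Fin n => ¬ Even (l i)) := by
          apply Finset.filter_congr
          intro i _
          simp [Nat.not_even_iff_odd]
        have hsum := Finset.card_filter_add_card_filter_not
          (s := (Finset.univ : Finset (Fin n))) (p := fun i => Even (l i))
        rw [Finset.card_univ, Fintype.card_fin] at hsum
        rw [hSdef, hfe]
        omega
      have hmem : ∀ i : Fin n, i ∈ S ↔ Odd (l i) := by
        intro i; rw [hSdef]; simp
      have hrel : ∀ (M : Matrix (Fin n) (Fin n) ℂ),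
          (∀ i j, M i j = t j ^ (l i : ℤ) - t j ^ (-(l i : ℤ)) ∨
            M i j = t j ^ (l i : ℤ) + t j ^ (-(l i : ℤ))) → True := fun _ _ => trivial
      -- prove both determinants are zero
      have hdet : ∀ (f : ℂ → ℂ → ℂ), (∀ a b : ℂ, f (-a) (-b) = f a b) →
          (∀ a b : ℂ, f (-a) (-b) = f a b) → True := fun _ _ _ => trivial
      have hA : (Matrix.of fun i j : Fin n => t j ^ (l i : ℤ) - t j ^ (-(l i : ℤ))).det = 0 := by
        apply det_eq_zero_of_pairs _ p q hp hpq S hScard (-1) (by ring)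
        intro m i
        simp only [Matrix.of_apply, htq m]
        rcases Nat.even_or_odd (l i) with he | ho
        · have he' : Even ((l i : ℤ)) := by exact_mod_cast he
          rw [if_neg (fun hc => (Nat.not_even_iff_odd.mpr ((hmem i).mp hc)) he)]
          rw [he'.neg_zpow, he'.neg.neg_zpow]
          ring
        · have ho' : Odd ((l i : ℤ)) := by exact_mod_cast ho
          rw [if_pos ((hmem i).mpr ho)]
          rw [ho'.neg_zpow, ho'.neg.neg_zpow]
          ring
      have hB : (Matrix.of fun i j : Fin n => t j ^ (l i : ℤ) + t j ^ (-(l i : ℤ))).det = 0 := by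
        apply det_eq_zero_of_pairs _ p q hp hpq S hScard (-1) (by ring)
        intro m i
        simp only [Matrix.of_apply, htq m]
        rcases Nat.even_or_odd (l i) with he | ho
        · have he' : Even ((l i : ℤ)) := by exact_mod_cast he
          rw [if_neg (fun hc => (Nat.not_even_iff_odd.mpr ((hmem i).mp hc)) he)]
          rw [he'.neg_zpow, he'.neg.neg_zpow]
          ring
        · have ho' : Odd ((l i : ℤ)) := by exact_mod_cast ho
          rw [if_pos ((hmem i).mpr ho)]
          rw [ho'.neg_zpow, ho'.neg.neg_zpow]
          ring
      rw [chiSO, hA, hB]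
      simp
    · -- more than n-k odd entries : use S = even rows, s = 1
      set S : Finset (Fin n) := Finset.univ.filter (fun i => Even (l i)) with hSdef
      have hScard : S.card < k := by
        have hfe : (Finset.univ.filter fun i : Fin n => Odd (l i)) =
            (Finset.univ.filter fun i : Fin n => ¬ Even (l i)) := by
          apply Finset.filter_congr
          intro i _
          simp [Nat.not_even_iff_odd]
        have hsum := Finset.card_filter_add_card_filter_not
          (s := (Finset.univ : Finset (Fin n))) (p := fun i => Even (l i))
        rw [Finset.card_univ, Fintype.card_fin] at hsum
        rw [hfe] at hcase
        rw [hSdef]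
        omega
      have hmem : ∀ i : Fin n, i ∈ S ↔ Even (l i) := by
        intro i; rw [hSdef]; simp
      have hA : (Matrix.of fun i j : Fin n => t j ^ (l i : ℤ) - t j ^ (-(l i : ℤ))).det = 0 := by
        apply det_eq_zero_of_pairs _ p q hp hpq S hScard 1 (by ring)
        intro m i
        simp only [Matrix.of_apply, htq m]
        rcases Nat.even_or_odd (l i) with he | ho
        · have he' : Even ((l i : ℤ)) := by exact_mod_cast he
          rw [if_pos ((hmem i).mpr he)]
          rw [he'.neg_zpow, he'.neg.neg_zpow]
          ring
        · have ho' : Odd ((l i : ℤ)) := by exact_mod_cast ho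
          rw [if_neg (fun hc => (Nat.not_even_iff_odd.mpr ho) ((hmem i).mp hc))]
          rw [ho'.neg_zpow, ho'.neg.neg_zpow]
          ring
      have hB : (Matrix.of fun i j : Fin n => t j ^ (l i : ℤ) + t j ^ (-(l i : ℤ))).det = 0 := by
        apply det_eq_zero_of_pairs _ p q hp hpq S hScard 1 (by ring)
        intro m i
        simp only [Matrix.of_apply, htq m]
        rcases Nat.even_or_odd (l i) with he | ho
        · have he' : Even ((l i : ℤ)) := by exact_mod_cast he
          rw [if_pos ((hmem i).mpr he)]
          rw [he'.neg_zpow, he'.neg.neg_zpow]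
          ring
        · have ho' : Odd ((l i : ℤ)) := by exact_mod_cast ho
          rw [if_neg (fun hc => (Nat.not_even_iff_odd.mpr ho) ((hmem i).mp hc))]
          rw [ho'.neg_zpow, ho'.neg.neg_zpow]
          ring
      rw [chiSO, hA, hB]
      simp
  have : (fun ε : ℝ => chiSO l (CnkEps n k ε)) = fun _ => (0 : ℂ) := funext key
  rw [this]
  exact tendsto_const_nhds
end

section
/- Vanishing of G₂(ℂ) characters on the class of the element (x,−x,−x^{−2}): Let k and l be nonnegative integers, both odd, and let x be a complex number with x ≠ 0 and x⁶ ≠ 1. Then Θ_{k,l}(x,−x,−x^{−2}) = 0; in fact both Schur values vanish: S_{(k+2l+1,k+l+1,0)}(x,−x,−x^{−2}) = 0 and S_{(k+2l+1,l,0)}(x,−x,−x^{−2}) = 0. -/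
/-- The Schur value `S_{(a,b,c)}(t₁,t₂,t₃) = det((t_j^{m_i})) / ∏_{i<j}(t_i − t_j)` with
`(m₁,m₂,m₃) = (a+2,b+1,c)`: the character of the irreducible `GL(3,ℂ)`-representation with
highest weight `(a,b,c)` at the regular element `(t₁,t₂,t₃)`. -/
noncomputable def schur (a b c : ℕ) (t₁ t₂ t₃ : ℂ) : ℂ :=
  (Matrix.of ![![t₁ ^ (a + 2), t₂ ^ (a + 2), t₃ ^ (a + 2)],
      ![t₁ ^ (b + 1), t₂ ^ (b + 1), t₃ ^ (b + 1)],
      ![t₁ ^ c, t₂ ^ c, t₃ ^ c]]).det /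
    ((t₁ - t₂) * (t₁ - t₃) * (t₂ - t₃))

/-- The character `Θ_{k,l}` of the irreducible `G₂(ℂ)`-representation with highest weight
`kω₁ + lω₂`, evaluated at the element `(x, −x, −x⁻²)` of `SL(3,ℂ) ⊂ G₂(ℂ)` via
Proposition 24.48 of Fulton–Harris. -/
noncomputable def thetaG2 (k l : ℕ) (x : ℂ) : ℂ :=
  (schur (k + 2 * l + 1) (k + l + 1) 0 x (-x) (-(x ^ 2)⁻¹) -
      schur (k + 2 * l + 1) l 0 x (-x) (-(x ^ 2)⁻¹)) /
    (schur 1 1 0 x (-x) (-(x ^ 2)⁻¹) - schur 1 0 0 x (-x) (-(x ^ 2)⁻¹))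

lemma schur_eq_zero (a b : ℕ) (ha : Even (a + 2)) (hb : Even (b + 1)) (x t : ℂ) :
    schur a b 0 x (-x) t = 0 := by
  unfold schur
  rw [Matrix.det_fin_three]
  simp only [Matrix.of_apply, Matrix.cons_val', Matrix.cons_val_zero, Matrix.cons_val_one,
    Matrix.head_cons, Matrix.empty_val', Matrix.cons_val_fin_one, Matrix.head_fin_const,
    Matrix.cons_val_two, Matrix.tail_cons, ha.neg_pow, hb.neg_pow, pow_zero]
  ring_nf

/-- Vanishing of `G₂(ℂ)` characters at `(x,−x,−x⁻²)` when `k` and `l` are both odd; in fact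
both Schur values vanish. -/

theorem g2Vanishing (k l : ℕ) (hk : Odd k) (hl : Odd l) (x : ℂ) (hx : x ≠ 0)
    (hx6 : x ^ 6 ≠ 1) :
    thetaG2 k l x = 0 ∧
      schur (k + 2 * l + 1) (k + l + 1) 0 x (-x) (-(x ^ 2)⁻¹) = 0 ∧
      schur (k + 2 * l + 1) l 0 x (-x) (-(x ^ 2)⁻¹) = 0 := by
  obtain ⟨k', rfl⟩ := hk
  obtain ⟨l', rfl⟩ := hl
  have h1 : schur (2 * k' + 1 + 2 * (2 * l' + 1) + 1) (2 * k' + 1 + (2 * l' + 1) + 1) 0 x (-x)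
      (-(x ^ 2)⁻¹) = 0 := schur_eq_zero _ _ ⟨k' + 2 * l' + 3, by ring⟩ ⟨k' + l' + 2, by ring⟩ x _
  have h2 : schur (2 * k' + 1 + 2 * (2 * l' + 1) + 1) (2 * l' + 1) 0 x (-x)
      (-(x ^ 2)⁻¹) = 0 := schur_eq_zero _ _ ⟨k' + 2 * l' + 3, by ring⟩ ⟨l' + 1, by ring⟩ x _
  refine ⟨?_, h1, h2⟩
  unfold thetaG2
  rw [h1, h2, sub_zero, zero_div]
end

section
/- Factorization of G₂(ℂ) characters at (x,−x,−x^{−2}), case k even and l odd: Let k be an even nonnegative integer and l an odd positive integer, and let x be a complex number with x ≠ 0, x⁴ ≠ 1 and x⁶ ≠ 1. Then Θ_{k,l}(x,−x,−x^{−2}) = − [(x^{(2k+3l+5)/2} − x^{−(2k+3l+5)/2}) / (x² − x^{−2})] · [(x^{3(l+1)/2} − x^{−3(l+1)/2}) / (x³ − x^{−3})]. (The two bracketed factors are the characters of irreducible SL(2,ℂ)-representations evaluated at (x²,x^{−2}) and (x³,x^{−3}) respectively.) -/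
set_option maxHeartbeats 3200000 in
theorem g2KeyEvenOdd (a b : ℕ) (x : ℂ) (hx : x ≠ 0) (hx4 : x ^ 4 ≠ 1) (hx6 : x ^ 6 ≠ 1) :
    thetaG2 (2 * a) (2 * b + 1) x =
      -((x ^ (2 * a + 3 * b + 4) - x⁻¹ ^ (2 * a + 3 * b + 4)) / (x ^ 2 - x⁻¹ ^ 2)) *
        ((x ^ (3 * b + 3) - x⁻¹ ^ (3 * b + 3)) / (x ^ 3 - x⁻¹ ^ 3)) := by
  have hx2 : x ^ 2 ≠ 0 := pow_ne_zero _ hx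
  have h1 : x * x⁻¹ = 1 := mul_inv_cancel₀ hx
  have h1' : x ^ 2 * (x ^ 2)⁻¹ = 1 := mul_inv_cancel₀ hx2
  have h2 : x ^ a * x⁻¹ ^ a = 1 := by rw [← mul_pow, h1, one_pow]
  have h3 : x ^ b * x⁻¹ ^ b = 1 := by rw [← mul_pow, h1, one_pow]
  have hx4' : x ^ 4 - 1 ≠ 0 := sub_ne_zero.mpr hx4
  have hx6' : x ^ 6 - 1 ≠ 0 := sub_ne_zero.mpr hx6
  have hx3p : x ^ 3 + 1 ≠ 0 := by
    intro h; apply hx6'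
    have h3' : x ^ 3 = -1 := by linear_combination h
    linear_combination (x ^ 3 - 1) * h3'
  have hx3m : x ^ 3 - 1 ≠ 0 := by
    intro h; apply hx6'
    have h3' : x ^ 3 = 1 := by linear_combination h
    linear_combination (x ^ 3 + 1) * h3'
  have hD : (x - -x) * (x - -(x ^ 2)⁻¹) * (-x - -(x ^ 2)⁻¹) ≠ 0 := by
    refine mul_ne_zero (mul_ne_zero ?_ ?_) ?_
    · intro h; apply hx
      have h' : 2 * x = 0 := by linear_combination h
      simpa using h'
    · intro h; exact hx3p (by linear_combination x ^ 2 * h - h1')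
    · intro h; exact hx3m (by linear_combination (-(x ^ 2)) * h + h1')
  have hd2 : x ^ 2 - x⁻¹ ^ 2 ≠ 0 := by
    intro h; exact hx4' (by linear_combination x ^ 2 * h + (x * x⁻¹ + 1) * h1)
  have hd3 : x ^ 3 - x⁻¹ ^ 3 ≠ 0 := by
    intro h
    exact hx6' (by linear_combination x ^ 3 * h + (x ^ 2 * x⁻¹ ^ 2 + x * x⁻¹ + 1) * h1)
  have hne : 2 * (x ^ 4 - 1) * (x ^ 6 - 1) * x⁻¹ ^ 5 ≠ 0 :=
    mul_ne_zero (mul_ne_zero (mul_ne_zero two_ne_zero hx4') hx6')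
      (pow_ne_zero _ (inv_ne_zero hx))
  unfold thetaG2 schur
  simp only [Matrix.det_fin_three, Matrix.of_apply, Matrix.cons_val', Matrix.cons_val_zero,
    Matrix.empty_val', Matrix.cons_val_fin_one, Matrix.cons_val_one, Matrix.head_cons,
    Matrix.head_fin_const, Matrix.cons_val_two, Matrix.tail_cons, Matrix.head_val',
    pow_zero]
  have o1 : Odd (2 * a + 2 * (2 * b + 1) + 1 + 2) := ⟨a + 2 * b + 2, by ring⟩
  have o2 : Odd (2 * a + (2 * b + 1) + 1 + 1) := ⟨a + b + 1, by ring⟩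
  have e3 : Even (2 * b + 1 + 1) := ⟨b + 1, by ring⟩
  have o4 : Odd (1 + 2) := ⟨1, rfl⟩
  have e5 : Even (1 + 1) := ⟨1, rfl⟩
  have o6 : Odd (0 + 1) := ⟨0, rfl⟩
  simp only [o1.neg_pow, o2.neg_pow, e3.neg_pow, o4.neg_pow, e5.neg_pow, o6.neg_pow]
  rw [div_sub_div_same, div_sub_div_same, div_div_div_cancel_right₀ hD]
  simp only [← inv_pow, mul_one]
  have hden : x ^ (1 + 2) * x ^ (1 + 1) - x ^ (1 + 2) * (x⁻¹ ^ 2) ^ (1 + 1) -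
        -x ^ (1 + 2) * x ^ (1 + 1) + -x ^ (1 + 2) * (x⁻¹ ^ 2) ^ (1 + 1) +
        -(x⁻¹ ^ 2) ^ (1 + 2) * x ^ (1 + 1) - -(x⁻¹ ^ 2) ^ (1 + 2) * x ^ (1 + 1) -
      (x ^ (1 + 2) * -x ^ (0 + 1) - x ^ (1 + 2) * -(x⁻¹ ^ 2) ^ (0 + 1) -
        -x ^ (1 + 2) * x ^ (0 + 1) + -x ^ (1 + 2) * -(x⁻¹ ^ 2) ^ (0 + 1) +
        -(x⁻¹ ^ 2) ^ (1 + 2) * x ^ (0 + 1) - -(x⁻¹ ^ 2) ^ (1 + 2) * -x ^ (0 + 1)) =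
      2 * (x ^ 4 - 1) * (x ^ 6 - 1) * x⁻¹ ^ 5 := by
    linear_combination (((-2) : ℂ) * x ^ 9 * x⁻¹ ^ 4 + ((-2) : ℂ) * x ^ 8 * x⁻¹ ^ 3 + ((-2) : ℂ) * x ^ 7 * x⁻¹ ^ 2 + ((-2) : ℂ) * x ^ 6 * x⁻¹ + (2 : ℂ) * x ^ 5 * x⁻¹ ^ 4 + ((-2) : ℂ) * x ^ 5 + (2 : ℂ) * x ^ 4 * x⁻¹ ^ 3 + (2 : ℂ) * x ^ 3 * x⁻¹ ^ 4 + (2 : ℂ) * x ^ 3 * x⁻¹ ^ 2 + (2 : ℂ) * x⁻¹ ^ 5) * h1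
  rw [hden, ← neg_div, div_mul_div_comm, div_eq_div_iff hne (mul_ne_zero hd2 hd3)]
  linear_combination ((2 : ℂ) * x ^ 16 * x⁻¹ ^ 4 * (x ^ a) ^ 2 * (x ^ b) ^ 6 + (2 : ℂ) * x ^ 15 * x⁻¹ ^ 3 * (x ^ a) ^ 2 * (x ^ b) ^ 6 + (2 : ℂ) * x ^ 14 * x⁻¹ ^ 2 * (x ^ a) ^ 2 * (x ^ b) ^ 6 + ((-2) : ℂ) * x ^ 13 * x⁻¹ ^ 7 * (x ^ a) ^ 2 * (x ^ b) ^ 3 * (x⁻¹ ^ b) ^ 3 + (2 : ℂ) * x ^ 13 * x⁻¹ * (x ^ a) ^ 2 * (x ^ b) ^ 6 + ((-2) : ℂ) * x ^ 12 * x⁻¹ ^ 8 * (x ^ b) ^ 3 * (x⁻¹ ^ a) ^ 2 * (x⁻¹ ^ b) ^ 3 + ((-2) : ℂ) * x ^ 12 * x⁻¹ ^ 6 * (x ^ a) ^ 2 * (x ^ b) ^ 3 * (x⁻¹ ^ b) ^ 3 + ((-2) : ℂ) * x ^ 12 * x⁻¹ ^ 4 * (x ^ a) ^ 2 * (x ^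 b) ^ 6 + (2 : ℂ) * x ^ 12 * (x ^ a) ^ 2 * (x ^ b) ^ 6 + ((-2) : ℂ) * x ^ 11 * x⁻¹ ^ 7 * (x ^ b) ^ 3 * (x⁻¹ ^ a) ^ 2 * (x⁻¹ ^ b) ^ 3 + ((-2) : ℂ) * x ^ 11 * x⁻¹ ^ 5 * (x ^ a) ^ 2 * (x ^ b) ^ 3 * (x⁻¹ ^ b) ^ 3 + ((-2) : ℂ) * x ^ 11 * x⁻¹ ^ 3 * (x ^ a) ^ 2 * (x ^ b) ^ 6 + ((-2) : ℂ) * x ^ 10 * x⁻¹ ^ 6 * (x ^ b) ^ 3 * (x⁻¹ ^ a) ^ 2 * (x⁻¹ ^ b) ^ 3 + ((-2) : ℂ) * x ^ 10 * x⁻¹ ^ 4 * (x ^ a) ^ 2 * (x ^ b) ^ 6 + ((-2) : ℂ) * x ^ 10 * x⁻¹ ^ 4 * (x ^ a) ^ 2 * (x ^ b) ^ 3 * (x⁻¹ ^ b) ^ 3 + ((-2) : ℂ) * x ^ 10 * x⁻¹ ^ 2 * (x ^ a) ^ 2 * (x ^ b) ^ 6 + (2 : ℂ) * x ^ 9 *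 x⁻¹ ^ 11 * (x⁻¹ ^ a) ^ 2 * (x⁻¹ ^ b) ^ 6 + (2 : ℂ) * x ^ 9 * x⁻¹ ^ 7 * (x ^ a) ^ 2 * (x ^ b) ^ 3 * (x⁻¹ ^ b) ^ 3 + (2 : ℂ) * x ^ 9 * x⁻¹ ^ 5 * (x ^ a) ^ 2 * (x ^ b) ^ 4 * (x⁻¹ ^ a) ^ 4 * (x⁻¹ ^ b) ^ 4 + ((-2) : ℂ) * x ^ 9 * x⁻¹ ^ 5 * (x ^ b) ^ 3 * (x⁻¹ ^ a) ^ 2 * (x⁻¹ ^ b) ^ 3 + ((-2) : ℂ) * x ^ 9 * x⁻¹ ^ 3 * (x ^ a) ^ 2 * (x ^ b) ^ 6 + (2 : ℂ) * x ^ 9 * x⁻¹ ^ 3 * (x ^ a) ^ 2 * (x ^ b) ^ 4 * (x⁻¹ ^ b) ^ 4 + ((-2) : ℂ) * x ^ 9 * x⁻¹ ^ 3 * (x ^ a) ^ 2 * (x ^ b) ^ 3 * (x⁻¹ ^ b) ^ 3 + (2 : ℂ) * x ^ 8 * x⁻¹ ^ 10 * (x⁻¹ ^ a) ^ 2 * (x⁻¹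 ^ b) ^ 6 + (2 : ℂ) * x ^ 8 * x⁻¹ ^ 8 * (x ^ b) ^ 3 * (x⁻¹ ^ a) ^ 2 * (x⁻¹ ^ b) ^ 3 + (2 : ℂ) * x ^ 8 * x⁻¹ ^ 6 * (x ^ a) ^ 2 * (x ^ b) ^ 3 * (x⁻¹ ^ b) ^ 3 + (2 : ℂ) * x ^ 8 * x⁻¹ ^ 4 * (x ^ a) ^ 2 * (x ^ b) ^ 4 * (x⁻¹ ^ a) ^ 4 * (x⁻¹ ^ b) ^ 4 + ((-2) : ℂ) * x ^ 8 * x⁻¹ ^ 4 * (x ^ b) ^ 3 * (x⁻¹ ^ a) ^ 2 * (x⁻¹ ^ b) ^ 3 + (2 : ℂ) * x ^ 8 * x⁻¹ ^ 2 * (x ^ a) ^ 2 * (x ^ b) ^ 4 * (x⁻¹ ^ b) ^ 4 + ((-2) : ℂ) * x ^ 8 * x⁻¹ ^ 2 * (x ^ a) ^ 2 * (x ^ b) ^ 3 * (x⁻¹ ^ b) ^ 3 + ((-2) : ℂ) * x ^ 7 * x⁻¹ ^ 9 * (x ^ a) ^ 2 * (x ^ b) ^ 2 * (x⁻¹ ^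 a) ^ 4 * (x⁻¹ ^ b) ^ 8 + (2 : ℂ) * x ^ 7 * x⁻¹ ^ 9 * (x⁻¹ ^ a) ^ 2 * (x⁻¹ ^ b) ^ 6 + ((-2) : ℂ) * x ^ 7 * x⁻¹ ^ 7 * (x ^ a) ^ 2 * (x ^ b) ^ 4 * (x⁻¹ ^ a) ^ 4 * (x⁻¹ ^ b) ^ 4 + (2 : ℂ) * x ^ 7 * x⁻¹ ^ 7 * (x ^ a) ^ 2 * (x ^ b) ^ 3 * (x⁻¹ ^ b) ^ 3 + (2 : ℂ) * x ^ 7 * x⁻¹ ^ 7 * (x ^ b) ^ 3 * (x⁻¹ ^ a) ^ 2 * (x⁻¹ ^ b) ^ 3 + ((-2) : ℂ) * x ^ 7 * x⁻¹ ^ 5 * (x ^ a) ^ 2 * (x ^ b) ^ 4 * (x⁻¹ ^ b) ^ 4 + (2 : ℂ) * x ^ 7 * x⁻¹ ^ 5 * (x ^ a) ^ 2 * (x ^ b) ^ 3 * (x⁻¹ ^ b) ^ 3 + (2 : ℂ) * x ^ 7 * x⁻¹ ^ 3 * (x ^ a) ^ 2 * (x ^ b) ^ 4 * (x⁻¹ ^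 a) ^ 4 * (x⁻¹ ^ b) ^ 4 + ((-2) : ℂ) * x ^ 7 * x⁻¹ ^ 3 * (x ^ b) ^ 3 * (x⁻¹ ^ a) ^ 2 * (x⁻¹ ^ b) ^ 3 + (2 : ℂ) * x ^ 7 * x⁻¹ * (x ^ a) ^ 2 * (x ^ b) ^ 4 * (x⁻¹ ^ b) ^ 4 + ((-2) : ℂ) * x ^ 7 * x⁻¹ * (x ^ a) ^ 2 * (x ^ b) ^ 3 * (x⁻¹ ^ b) ^ 3 + ((-2) : ℂ) * x ^ 6 * x⁻¹ ^ 8 * (x ^ a) ^ 2 * (x ^ b) ^ 4 * (x⁻¹ ^ a) ^ 4 * (x⁻¹ ^ b) ^ 4 + ((-2) : ℂ) * x ^ 6 * x⁻¹ ^ 8 * (x ^ a) ^ 2 * (x ^ b) ^ 2 * (x⁻¹ ^ a) ^ 4 * (x⁻¹ ^ b) ^ 8 + (2 : ℂ) * x ^ 6 * x⁻¹ ^ 8 * (x ^ b) ^ 3 * (x⁻¹ ^ a) ^ 2 * (x⁻¹ ^ b) ^ 3 + (2 : ℂ) * x ^ 6 * x⁻¹ ^ 8 * (x⁻¹ ^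 a) ^ 2 * (x⁻¹ ^ b) ^ 6 + ((-2) : ℂ) * x ^ 6 * x⁻¹ ^ 6 * (x ^ a) ^ 2 * (x ^ b) ^ 4 * (x⁻¹ ^ a) ^ 4 * (x⁻¹ ^ b) ^ 4 + ((-2) : ℂ) * x ^ 6 * x⁻¹ ^ 6 * (x ^ a) ^ 2 * (x ^ b) ^ 4 * (x⁻¹ ^ b) ^ 4 + (2 : ℂ) * x ^ 6 * x⁻¹ ^ 6 * (x ^ a) ^ 2 * (x ^ b) ^ 3 * (x⁻¹ ^ b) ^ 3 + (2 : ℂ) * x ^ 6 * x⁻¹ ^ 6 * (x ^ b) ^ 3 * (x⁻¹ ^ a) ^ 2 * (x⁻¹ ^ b) ^ 3 + ((-2) : ℂ) * x ^ 6 * x⁻¹ ^ 4 * (x ^ a) ^ 2 * (x ^ b) ^ 4 * (x⁻¹ ^ b) ^ 4 + (2 : ℂ) * x ^ 6 * x⁻¹ ^ 4 * (x ^ a) ^ 2 * (x ^ b) ^ 3 * (x⁻¹ ^ b) ^ 3 + (2 : ℂ) * x ^ 6 * x⁻¹ ^ 2 * (x ^ a) ^ 2 * (x ^ b) ^ 4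 * (x⁻¹ ^ a) ^ 4 * (x⁻¹ ^ b) ^ 4 + ((-2) : ℂ) * x ^ 6 * x⁻¹ ^ 2 * (x ^ b) ^ 3 * (x⁻¹ ^ a) ^ 2 * (x⁻¹ ^ b) ^ 3 + (2 : ℂ) * x ^ 6 * (x ^ a) ^ 2 * (x ^ b) ^ 4 * (x⁻¹ ^ b) ^ 4 + ((-2) : ℂ) * x ^ 6 * (x ^ a) ^ 2 * (x ^ b) ^ 3 * (x⁻¹ ^ b) ^ 3 + (2 : ℂ) * x ^ 5 * x⁻¹ ^ 11 * (x ^ a) ^ 2 * (x ^ b) ^ 2 * (x⁻¹ ^ a) ^ 4 * (x⁻¹ ^ b) ^ 8 + ((-2) : ℂ) * x ^ 5 * x⁻¹ ^ 11 * (x⁻¹ ^ a) ^ 2 * (x⁻¹ ^ b) ^ 6 + ((-2) : ℂ) * x ^ 5 * x⁻¹ ^ 7 * (x ^ a) ^ 2 * (x ^ b) ^ 4 * (x⁻¹ ^ a) ^ 4 * (x⁻¹ ^ b) ^ 4 + ((-2) : ℂ) * x ^ 5 * x⁻¹ ^ 7 * (x ^ a) ^ 2 * (x ^ b) ^ 2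 * (x⁻¹ ^ a) ^ 4 * (x⁻¹ ^ b) ^ 8 + (2 : ℂ) * x ^ 5 * x⁻¹ ^ 7 * (x ^ b) ^ 3 * (x⁻¹ ^ a) ^ 2 * (x⁻¹ ^ b) ^ 3 + (2 : ℂ) * x ^ 5 * x⁻¹ ^ 7 * (x⁻¹ ^ a) ^ 2 * (x⁻¹ ^ b) ^ 6 + ((-2) : ℂ) * x ^ 5 * x⁻¹ ^ 5 * (x ^ a) ^ 2 * (x ^ b) ^ 4 * (x⁻¹ ^ a) ^ 4 * (x⁻¹ ^ b) ^ 4 + ((-2) : ℂ) * x ^ 5 * x⁻¹ ^ 5 * (x ^ a) ^ 2 * (x ^ b) ^ 4 * (x⁻¹ ^ b) ^ 4 + (2 : ℂ) * x ^ 5 * x⁻¹ ^ 5 * (x ^ a) ^ 2 * (x ^ b) ^ 3 * (x⁻¹ ^ b) ^ 3 + (2 : ℂ) * x ^ 5 * x⁻¹ ^ 5 * (x ^ b) ^ 3 * (x⁻¹ ^ a) ^ 2 * (x⁻¹ ^ b) ^ 3 + ((-2) : ℂ) * x ^ 5 * x⁻¹ ^ 3 * (x ^ a) ^ 2 * (x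 ^ b) ^ 4 * (x⁻¹ ^ b) ^ 4 + (2 : ℂ) * x ^ 5 * x⁻¹ ^ 3 * (x ^ a) ^ 2 * (x ^ b) ^ 3 * (x⁻¹ ^ b) ^ 3 + (2 : ℂ) * x ^ 5 * x⁻¹ * (x ^ a) ^ 2 * (x ^ b) ^ 4 * (x⁻¹ ^ a) ^ 4 * (x⁻¹ ^ b) ^ 4 + ((-2) : ℂ) * x ^ 5 * x⁻¹ * (x ^ b) ^ 3 * (x⁻¹ ^ a) ^ 2 * (x⁻¹ ^ b) ^ 3 + (2 : ℂ) * x ^ 4 * x⁻¹ ^ 12 * (x ^ a) ^ 2 * (x ^ b) ^ 2 * (x⁻¹ ^ a) ^ 4 * (x⁻¹ ^ b) ^ 8 + (2 : ℂ) * x ^ 4 * x⁻¹ ^ 10 * (x ^ a) ^ 2 * (x ^ b) ^ 4 * (x⁻¹ ^ a) ^ 4 * (x⁻¹ ^ b) ^ 4 + (2 : ℂ) * x ^ 4 * x⁻¹ ^ 10 * (x ^ a) ^ 2 * (x ^ b) ^ 2 * (x⁻¹ ^ a) ^ 4 * (x⁻¹ ^ b) ^ 8 + ((-2) : ℂ)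 * x ^ 4 * x⁻¹ ^ 10 * (x⁻¹ ^ a) ^ 2 * (x⁻¹ ^ b) ^ 6 + (2 : ℂ) * x ^ 4 * x⁻¹ ^ 8 * (x ^ a) ^ 2 * (x ^ b) ^ 4 * (x⁻¹ ^ b) ^ 4 + ((-2) : ℂ) * x ^ 4 * x⁻¹ ^ 6 * (x ^ a) ^ 2 * (x ^ b) ^ 4 * (x⁻¹ ^ a) ^ 4 * (x⁻¹ ^ b) ^ 4 + ((-2) : ℂ) * x ^ 4 * x⁻¹ ^ 6 * (x ^ a) ^ 2 * (x ^ b) ^ 2 * (x⁻¹ ^ a) ^ 4 * (x⁻¹ ^ b) ^ 8 + (2 : ℂ) * x ^ 4 * x⁻¹ ^ 6 * (x ^ b) ^ 3 * (x⁻¹ ^ a) ^ 2 * (x⁻¹ ^ b) ^ 3 + (2 : ℂ) * x ^ 4 * x⁻¹ ^ 6 * (x⁻¹ ^ a) ^ 2 * (x⁻¹ ^ b) ^ 6 + ((-2) : ℂ) * x ^ 4 * x⁻¹ ^ 4 * (x ^ a) ^ 2 * (x ^ b) ^ 4 * (x⁻¹ ^ a) ^ 4 * (x⁻¹ ^ b)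 ^ 4 + ((-2) : ℂ) * x ^ 4 * x⁻¹ ^ 4 * (x ^ a) ^ 2 * (x ^ b) ^ 4 * (x⁻¹ ^ b) ^ 4 + (2 : ℂ) * x ^ 4 * x⁻¹ ^ 4 * (x ^ a) ^ 2 * (x ^ b) ^ 3 * (x⁻¹ ^ b) ^ 3 + (2 : ℂ) * x ^ 4 * x⁻¹ ^ 4 * (x ^ b) ^ 3 * (x⁻¹ ^ a) ^ 2 * (x⁻¹ ^ b) ^ 3 + ((-2) : ℂ) * x ^ 4 * x⁻¹ ^ 2 * (x ^ a) ^ 2 * (x ^ b) ^ 4 * (x⁻¹ ^ b) ^ 4 + (2 : ℂ) * x ^ 4 * x⁻¹ ^ 2 * (x ^ a) ^ 2 * (x ^ b) ^ 3 * (x⁻¹ ^ b) ^ 3 + (2 : ℂ) * x ^ 4 * (x ^ a) ^ 2 * (x ^ b) ^ 4 * (x⁻¹ ^ a) ^ 4 * (x⁻¹ ^ b) ^ 4 + ((-2) : ℂ) * x ^ 4 * (x ^ b) ^ 3 * (x⁻¹ ^ a) ^ 2 * (x⁻¹ ^ b) ^ 3 + (2 : ℂ) * x ^ 3 * x⁻¹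 ^ 11 * (x ^ a) ^ 2 * (x ^ b) ^ 2 * (x⁻¹ ^ a) ^ 4 * (x⁻¹ ^ b) ^ 8 + ((-2) : ℂ) * x ^ 3 * x⁻¹ ^ 11 * (x⁻¹ ^ a) ^ 2 * (x⁻¹ ^ b) ^ 6 + (2 : ℂ) * x ^ 3 * x⁻¹ ^ 9 * (x ^ a) ^ 2 * (x ^ b) ^ 4 * (x⁻¹ ^ a) ^ 4 * (x⁻¹ ^ b) ^ 4 + (2 : ℂ) * x ^ 3 * x⁻¹ ^ 9 * (x ^ a) ^ 2 * (x ^ b) ^ 2 * (x⁻¹ ^ a) ^ 4 * (x⁻¹ ^ b) ^ 8 + ((-2) : ℂ) * x ^ 3 * x⁻¹ ^ 9 * (x⁻¹ ^ a) ^ 2 * (x⁻¹ ^ b) ^ 6 + (2 : ℂ) * x ^ 3 * x⁻¹ ^ 7 * (x ^ a) ^ 2 * (x ^ b) ^ 4 * (x⁻¹ ^ b) ^ 4 + ((-2) : ℂ) * x ^ 3 * x⁻¹ ^ 7 * (x ^ a) ^ 2 * (x ^ b) ^ 3 * (x⁻¹ ^ b) ^ 3 + ((-2) : ℂ) * x ^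 3 * x⁻¹ ^ 5 * (x ^ a) ^ 2 * (x ^ b) ^ 4 * (x⁻¹ ^ a) ^ 4 * (x⁻¹ ^ b) ^ 4 + ((-2) : ℂ) * x ^ 3 * x⁻¹ ^ 5 * (x ^ a) ^ 2 * (x ^ b) ^ 2 * (x⁻¹ ^ a) ^ 4 * (x⁻¹ ^ b) ^ 8 + (2 : ℂ) * x ^ 3 * x⁻¹ ^ 5 * (x ^ b) ^ 3 * (x⁻¹ ^ a) ^ 2 * (x⁻¹ ^ b) ^ 3 + (2 : ℂ) * x ^ 3 * x⁻¹ ^ 5 * (x⁻¹ ^ a) ^ 2 * (x⁻¹ ^ b) ^ 6 + ((-2) : ℂ) * x ^ 3 * x⁻¹ ^ 3 * (x ^ a) ^ 2 * (x ^ b) ^ 4 * (x⁻¹ ^ a) ^ 4 * (x⁻¹ ^ b) ^ 4 + ((-2) : ℂ) * x ^ 3 * x⁻¹ ^ 3 * (x ^ a) ^ 2 * (x ^ b) ^ 4 * (x⁻¹ ^ b) ^ 4 + (2 : ℂ) * x ^ 3 * x⁻¹ ^ 3 * (x ^ a) ^ 2 * (x ^ b) ^ 3 * (x⁻¹ ^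 b) ^ 3 + (2 : ℂ) * x ^ 3 * x⁻¹ ^ 3 * (x ^ b) ^ 3 * (x⁻¹ ^ a) ^ 2 * (x⁻¹ ^ b) ^ 3 + ((-2) : ℂ) * x ^ 3 * x⁻¹ * (x ^ a) ^ 2 * (x ^ b) ^ 4 * (x⁻¹ ^ b) ^ 4 + (2 : ℂ) * x ^ 3 * x⁻¹ * (x ^ a) ^ 2 * (x ^ b) ^ 3 * (x⁻¹ ^ b) ^ 3 + ((-2) : ℂ) * x ^ 2 * x⁻¹ ^ 14 * (x ^ a) ^ 2 * (x ^ b) ^ 2 * (x⁻¹ ^ a) ^ 4 * (x⁻¹ ^ b) ^ 8 + (2 : ℂ) * x ^ 2 * x⁻¹ ^ 10 * (x ^ a) ^ 2 * (x ^ b) ^ 2 * (x⁻¹ ^ a) ^ 4 * (x⁻¹ ^ b) ^ 8 + ((-2) : ℂ) * x ^ 2 * x⁻¹ ^ 10 * (x⁻¹ ^ a) ^ 2 * (x⁻¹ ^ b) ^ 6 + (2 : ℂ) * x ^ 2 * x⁻¹ ^ 8 * (x ^ a) ^ 2 * (x ^ b) ^ 4 * (x⁻¹ ^ a) ^ 4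 * (x⁻¹ ^ b) ^ 4 + (2 : ℂ) * x ^ 2 * x⁻¹ ^ 8 * (x ^ a) ^ 2 * (x ^ b) ^ 2 * (x⁻¹ ^ a) ^ 4 * (x⁻¹ ^ b) ^ 8 + ((-2) : ℂ) * x ^ 2 * x⁻¹ ^ 8 * (x ^ b) ^ 3 * (x⁻¹ ^ a) ^ 2 * (x⁻¹ ^ b) ^ 3 + ((-2) : ℂ) * x ^ 2 * x⁻¹ ^ 8 * (x⁻¹ ^ a) ^ 2 * (x⁻¹ ^ b) ^ 6 + (2 : ℂ) * x ^ 2 * x⁻¹ ^ 6 * (x ^ a) ^ 2 * (x ^ b) ^ 4 * (x⁻¹ ^ b) ^ 4 + ((-2) : ℂ) * x ^ 2 * x⁻¹ ^ 6 * (x ^ a) ^ 2 * (x ^ b) ^ 3 * (x⁻¹ ^ b) ^ 3 + ((-2) : ℂ) * x ^ 2 * x⁻¹ ^ 4 * (x ^ a) ^ 2 * (x ^ b) ^ 4 * (x⁻¹ ^ a) ^ 4 * (x⁻¹ ^ b) ^ 4 + ((-2) : ℂ) * x ^ 2 * x⁻¹ ^ 4 * (x ^ a) ^ 2 * (x ^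 b) ^ 2 * (x⁻¹ ^ a) ^ 4 * (x⁻¹ ^ b) ^ 8 + (2 : ℂ) * x ^ 2 * x⁻¹ ^ 4 * (x ^ b) ^ 3 * (x⁻¹ ^ a) ^ 2 * (x⁻¹ ^ b) ^ 3 + (2 : ℂ) * x ^ 2 * x⁻¹ ^ 4 * (x⁻¹ ^ a) ^ 2 * (x⁻¹ ^ b) ^ 6 + ((-2) : ℂ) * x ^ 2 * x⁻¹ ^ 2 * (x ^ a) ^ 2 * (x ^ b) ^ 4 * (x⁻¹ ^ a) ^ 4 * (x⁻¹ ^ b) ^ 4 + ((-2) : ℂ) * x ^ 2 * x⁻¹ ^ 2 * (x ^ a) ^ 2 * (x ^ b) ^ 4 * (x⁻¹ ^ b) ^ 4 + (2 : ℂ) * x ^ 2 * x⁻¹ ^ 2 * (x ^ a) ^ 2 * (x ^ b) ^ 3 * (x⁻¹ ^ b) ^ 3 + (2 : ℂ) * x ^ 2 * x⁻¹ ^ 2 * (x ^ b) ^ 3 * (x⁻¹ ^ a) ^ 2 * (x⁻¹ ^ b) ^ 3 + ((-2) : ℂ) * x ^ 2 * (x ^ a) ^ 2 * (x ^ b) ^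 4 * (x⁻¹ ^ b) ^ 4 + (2 : ℂ) * x ^ 2 * (x ^ a) ^ 2 * (x ^ b) ^ 3 * (x⁻¹ ^ b) ^ 3 + ((-2) : ℂ) * x * x⁻¹ ^ 13 * (x ^ a) ^ 2 * (x ^ b) ^ 2 * (x⁻¹ ^ a) ^ 4 * (x⁻¹ ^ b) ^ 8 + (2 : ℂ) * x * x⁻¹ ^ 9 * (x ^ a) ^ 2 * (x ^ b) ^ 2 * (x⁻¹ ^ a) ^ 4 * (x⁻¹ ^ b) ^ 8 + ((-2) : ℂ) * x * x⁻¹ ^ 9 * (x⁻¹ ^ a) ^ 2 * (x⁻¹ ^ b) ^ 6 + (2 : ℂ) * x * x⁻¹ ^ 7 * (x ^ a) ^ 2 * (x ^ b) ^ 4 * (x⁻¹ ^ a) ^ 4 * (x⁻¹ ^ b) ^ 4 + (2 : ℂ) * x * x⁻¹ ^ 7 * (x ^ a) ^ 2 * (x ^ b) ^ 2 * (x⁻¹ ^ a) ^ 4 * (x⁻¹ ^ b) ^ 8 + ((-2) : ℂ) * x * x⁻¹ ^ 7 * (x ^ b) ^ 3 * (x⁻¹ ^ a) ^ 2 * (x⁻¹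 ^ b) ^ 3 + ((-2) : ℂ) * x * x⁻¹ ^ 7 * (x⁻¹ ^ a) ^ 2 * (x⁻¹ ^ b) ^ 6 + (2 : ℂ) * x * x⁻¹ ^ 5 * (x ^ a) ^ 2 * (x ^ b) ^ 4 * (x⁻¹ ^ b) ^ 4 + ((-2) : ℂ) * x * x⁻¹ ^ 5 * (x ^ a) ^ 2 * (x ^ b) ^ 3 * (x⁻¹ ^ b) ^ 3 + ((-2) : ℂ) * x * x⁻¹ ^ 3 * (x ^ a) ^ 2 * (x ^ b) ^ 4 * (x⁻¹ ^ a) ^ 4 * (x⁻¹ ^ b) ^ 4 + ((-2) : ℂ) * x * x⁻¹ ^ 3 * (x ^ a) ^ 2 * (x ^ b) ^ 2 * (x⁻¹ ^ a) ^ 4 * (x⁻¹ ^ b) ^ 8 + (2 : ℂ) * x * x⁻¹ ^ 3 * (x ^ b) ^ 3 * (x⁻¹ ^ a) ^ 2 * (x⁻¹ ^ b) ^ 3 + (2 : ℂ) * x * x⁻¹ ^ 3 * (x⁻¹ ^ a) ^ 2 * (x⁻¹ ^ b) ^ 6 + ((-2) : ℂ) * x * x⁻¹ * (x ^ a) ^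 2 * (x ^ b) ^ 4 * (x⁻¹ ^ a) ^ 4 * (x⁻¹ ^ b) ^ 4 + ((-2) : ℂ) * x * x⁻¹ * (x ^ a) ^ 2 * (x ^ b) ^ 4 * (x⁻¹ ^ b) ^ 4 + (2 : ℂ) * x * x⁻¹ * (x ^ a) ^ 2 * (x ^ b) ^ 3 * (x⁻¹ ^ b) ^ 3 + (2 : ℂ) * x * x⁻¹ * (x ^ b) ^ 3 * (x⁻¹ ^ a) ^ 2 * (x⁻¹ ^ b) ^ 3 + ((-2) : ℂ) * x⁻¹ ^ 12 * (x ^ a) ^ 2 * (x ^ b) ^ 2 * (x⁻¹ ^ a) ^ 4 * (x⁻¹ ^ b) ^ 8 + (2 : ℂ) * x⁻¹ ^ 8 * (x ^ a) ^ 2 * (x ^ b) ^ 2 * (x⁻¹ ^ a) ^ 4 * (x⁻¹ ^ b) ^ 8 + ((-2) : ℂ) * x⁻¹ ^ 8 * (x⁻¹ ^ a) ^ 2 * (x⁻¹ ^ b) ^ 6 + (2 : ℂ) * x⁻¹ ^ 6 * (x ^ a) ^ 2 * (x ^ b) ^ 4 * (x⁻¹ ^ a) ^ 4 * (x⁻¹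 ^ b) ^ 4 + (2 : ℂ) * x⁻¹ ^ 6 * (x ^ a) ^ 2 * (x ^ b) ^ 2 * (x⁻¹ ^ a) ^ 4 * (x⁻¹ ^ b) ^ 8 + ((-2) : ℂ) * x⁻¹ ^ 6 * (x ^ b) ^ 3 * (x⁻¹ ^ a) ^ 2 * (x⁻¹ ^ b) ^ 3 + ((-2) : ℂ) * x⁻¹ ^ 6 * (x⁻¹ ^ a) ^ 2 * (x⁻¹ ^ b) ^ 6 + (2 : ℂ) * x⁻¹ ^ 4 * (x ^ a) ^ 2 * (x ^ b) ^ 4 * (x⁻¹ ^ b) ^ 4 + ((-2) : ℂ) * x⁻¹ ^ 4 * (x ^ a) ^ 2 * (x ^ b) ^ 3 * (x⁻¹ ^ b) ^ 3 + ((-2) : ℂ) * x⁻¹ ^ 2 * (x ^ a) ^ 2 * (x ^ b) ^ 4 * (x⁻¹ ^ a) ^ 4 * (x⁻¹ ^ b) ^ 4 + ((-2) : ℂ) * x⁻¹ ^ 2 * (x ^ a) ^ 2 * (x ^ b) ^ 2 * (x⁻¹ ^ a) ^ 4 * (x⁻¹ ^ b) ^ 8 + (2 : ℂ) * x⁻¹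 ^ 2 * (x ^ b) ^ 3 * (x⁻¹ ^ a) ^ 2 * (x⁻¹ ^ b) ^ 3 + (2 : ℂ) * x⁻¹ ^ 2 * (x⁻¹ ^ a) ^ 2 * (x⁻¹ ^ b) ^ 6 + ((-2) : ℂ) * (x ^ a) ^ 2 * (x ^ b) ^ 4 * (x⁻¹ ^ a) ^ 4 * (x⁻¹ ^ b) ^ 4 + ((-2) : ℂ) * (x ^ a) ^ 2 * (x ^ b) ^ 4 * (x⁻¹ ^ b) ^ 4 + (2 : ℂ) * (x ^ a) ^ 2 * (x ^ b) ^ 3 * (x⁻¹ ^ b) ^ 3 + (2 : ℂ) * (x ^ b) ^ 3 * (x⁻¹ ^ a) ^ 2 * (x⁻¹ ^ b) ^ 3) * h1 + ((2 : ℂ) * x ^ 4 * (x ^ a) * (x ^ b) ^ 4 * (x⁻¹ ^ a) ^ 3 * (x⁻¹ ^ b) ^ 4 + (2 : ℂ) * x ^ 4 * (x ^ b) ^ 4 * (x⁻¹ ^ a) ^ 2 * (x⁻¹ ^ b) ^ 4 + ((-2) : ℂ) * x⁻¹ ^ 12 * (x ^ a) * (x ^ b) ^ 2 * (x⁻¹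 ^ a) ^ 3 * (x⁻¹ ^ b) ^ 8 + ((-2) : ℂ) * x⁻¹ ^ 12 * (x ^ b) ^ 2 * (x⁻¹ ^ a) ^ 2 * (x⁻¹ ^ b) ^ 8 + (2 : ℂ) * x⁻¹ ^ 8 * (x ^ a) * (x ^ b) ^ 2 * (x⁻¹ ^ a) ^ 3 * (x⁻¹ ^ b) ^ 8 + (2 : ℂ) * x⁻¹ ^ 8 * (x ^ b) ^ 2 * (x⁻¹ ^ a) ^ 2 * (x⁻¹ ^ b) ^ 8 + (2 : ℂ) * x⁻¹ ^ 6 * (x ^ a) * (x ^ b) ^ 4 * (x⁻¹ ^ a) ^ 3 * (x⁻¹ ^ b) ^ 4 + (2 : ℂ) * x⁻¹ ^ 6 * (x ^ a) * (x ^ b) ^ 2 * (x⁻¹ ^ a) ^ 3 * (x⁻¹ ^ b) ^ 8 + (2 : ℂ) * x⁻¹ ^ 6 * (x ^ b) ^ 4 * (x⁻¹ ^ a) ^ 2 * (x⁻¹ ^ b) ^ 4 + (2 : ℂ) * x⁻¹ ^ 6 * (x ^ b) ^ 2 * (x⁻¹ ^ a) ^ 2 * (x⁻¹ ^ b) ^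 8 + ((-2) : ℂ) * x⁻¹ ^ 2 * (x ^ a) * (x ^ b) ^ 4 * (x⁻¹ ^ a) ^ 3 * (x⁻¹ ^ b) ^ 4 + ((-2) : ℂ) * x⁻¹ ^ 2 * (x ^ a) * (x ^ b) ^ 2 * (x⁻¹ ^ a) ^ 3 * (x⁻¹ ^ b) ^ 8 + ((-2) : ℂ) * x⁻¹ ^ 2 * (x ^ b) ^ 4 * (x⁻¹ ^ a) ^ 2 * (x⁻¹ ^ b) ^ 4 + ((-2) : ℂ) * x⁻¹ ^ 2 * (x ^ b) ^ 2 * (x⁻¹ ^ a) ^ 2 * (x⁻¹ ^ b) ^ 8 + ((-2) : ℂ) * (x ^ a) * (x ^ b) ^ 4 * (x⁻¹ ^ a) ^ 3 * (x⁻¹ ^ b) ^ 4 + ((-2) : ℂ) * (x ^ b) ^ 4 * (x⁻¹ ^ a) ^ 2 * (x⁻¹ ^ b) ^ 4) * h2 + ((2 : ℂ) * x ^ 6 * (x ^ a) ^ 2 * (x ^ b) ^ 3 * (x⁻¹ ^ b) ^ 3 + (2 : ℂ) * x ^ 4 * (x ^ b) ^ 3 * (x⁻¹ ^ a) ^ 2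 * (x⁻¹ ^ b) ^ 3 + ((-2) : ℂ) * x ^ 2 * (x ^ a) ^ 2 * (x ^ b) ^ 3 * (x⁻¹ ^ b) ^ 3 + ((-2) : ℂ) * x⁻¹ ^ 12 * (x ^ b) * (x⁻¹ ^ a) ^ 2 * (x⁻¹ ^ b) ^ 7 + ((-2) : ℂ) * x⁻¹ ^ 12 * (x⁻¹ ^ a) ^ 2 * (x⁻¹ ^ b) ^ 6 + (2 : ℂ) * x⁻¹ ^ 8 * (x ^ b) * (x⁻¹ ^ a) ^ 2 * (x⁻¹ ^ b) ^ 7 + (2 : ℂ) * x⁻¹ ^ 8 * (x⁻¹ ^ a) ^ 2 * (x⁻¹ ^ b) ^ 6 + (2 : ℂ) * x⁻¹ ^ 6 * (x ^ b) ^ 3 * (x⁻¹ ^ a) ^ 2 * (x⁻¹ ^ b) ^ 3 + (2 : ℂ) * x⁻¹ ^ 6 * (x ^ b) * (x⁻¹ ^ a) ^ 2 * (x⁻¹ ^ b) ^ 7 + (2 : ℂ) * x⁻¹ ^ 6 * (x⁻¹ ^ a) ^ 2 * (x⁻¹ ^ b) ^ 6 + (2 : ℂ) * x⁻¹ ^ 4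 * (x ^ a) ^ 2 * (x ^ b) ^ 3 * (x⁻¹ ^ b) ^ 3 + ((-2) : ℂ) * x⁻¹ ^ 2 * (x ^ b) ^ 3 * (x⁻¹ ^ a) ^ 2 * (x⁻¹ ^ b) ^ 3 + ((-2) : ℂ) * x⁻¹ ^ 2 * (x ^ b) * (x⁻¹ ^ a) ^ 2 * (x⁻¹ ^ b) ^ 7 + ((-2) : ℂ) * x⁻¹ ^ 2 * (x⁻¹ ^ a) ^ 2 * (x⁻¹ ^ b) ^ 6 + ((-2) : ℂ) * (x ^ a) ^ 2 * (x ^ b) ^ 3 * (x⁻¹ ^ b) ^ 3 + ((-2) : ℂ) * (x ^ b) ^ 3 * (x⁻¹ ^ a) ^ 2 * (x⁻¹ ^ b) ^ 3) * h3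

/-- Factorization of `G₂(ℂ)` characters at `(x,−x,−x⁻²)`, case `k` even and `l` odd:
`Θ_{k,l}(x,−x,−x⁻²) = −[(x^{(2k+3l+5)/2} − x^{−(2k+3l+5)/2})/(x² − x⁻²)] ·
[(x^{3(l+1)/2} − x^{−3(l+1)/2})/(x³ − x⁻³)]`. -/
theorem g2FactorizationEvenOdd (k l : ℕ) (hk : Even k) (hl : Odd l) (x : ℂ) (hx : x ≠ 0)
    (hx4 : x ^ 4 ≠ 1) (hx6 : x ^ 6 ≠ 1) :
    thetaG2 k l x =
      -((x ^ ((2 * k + 3 * l + 5) / 2) - x⁻¹ ^ ((2 * k + 3 * l + 5) / 2)) /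
          (x ^ 2 - x⁻¹ ^ 2)) *
        ((x ^ (3 * (l + 1) / 2) - x⁻¹ ^ (3 * (l + 1) / 2)) / (x ^ 3 - x⁻¹ ^ 3)) := by
  obtain ⟨a, rfl⟩ := hk
  obtain ⟨b, rfl⟩ := hl
  have e1 : (2 * (a + a) + 3 * (2 * b + 1) + 5) / 2 = 2 * a + 3 * b + 4 := by omega
  have e2 : 3 * (2 * b + 1 + 1) / 2 = 3 * b + 3 := by omega
  rw [e1, e2, show a + a = 2 * a from (two_mul a).symm]
  exact g2KeyEvenOdd a b x hx hx4 hx6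
end

section
/- Factorization of G₂(ℂ) characters at (x,−x,−x^{−2}), case k odd and l even: Let k be an odd positive integer and l an even nonnegative integer, and let x be a complex number with x ≠ 0, x⁴ ≠ 1 and x⁶ ≠ 1. Then Θ_{k,l}(x,−x,−x^{−2}) = − [(x^{(k+1)/2} − x^{−(k+1)/2}) / (x² − x^{−2})] · [(x^{3(k+2l+3)/2} − x^{−3(k+2l+3)/2}) / (x³ − x^{−3})]. (The two bracketed factors are the characters of irreducible SL(2,ℂ)-representations evaluated at (x²,x^{−2}) and (x³,x^{−3}) respectively.) -/
/-!
At `t = (x, -x, y)` with `a`, `b` even, the first two columns of the alternant agree in the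
rows of even exponent and are opposite in the row of odd exponent, so the determinant collapses
and `S_{(a,b,0)}(x, -x, y) = x^b (x^{a+2} - y^{a+2}) / (x² - y²)`. Taking `y = -x⁻²`, and writing
`k = 2n - 1`, `v = (k + 2l + 3)/2 = l + n + 1`, the numerator of `Θ_{k,l}` becomes
`x^{l+n}(xⁿ - x⁻ⁿ) · x^{-v}(x^{3v} - x^{-3v}) / (x⁻¹(x³ - x⁻³))`, in which the monomial
prefactors cancel, while the denominator `S_{(1,1,0)} - S_{(1,0,0)} = e₂ - e₁` equals `x⁻² - x²`.
-/

theorem schur_one_zero_zero {t₁ t₂ t₃ : ℂ} (h : (t₁ - t₂) * (t₁ - t₃) * (t₂ - t₃) ≠ 0) :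
    schur 1 0 0 t₁ t₂ t₃ = t₁ + t₂ + t₃ := by
  rw [schur, div_eq_iff h, Matrix.det_fin_three]
  simp only [Matrix.of_apply, Matrix.cons_val', Matrix.cons_val_zero, Matrix.cons_val_one,
    Matrix.cons_val, Matrix.cons_val_fin_one, pow_zero]
  ring

theorem schur_one_one_zero {t₁ t₂ t₃ : ℂ} (h : (t₁ - t₂) * (t₁ - t₃) * (t₂ - t₃) ≠ 0) :
    schur 1 1 0 t₁ t₂ t₃ = t₁ * t₂ + t₁ * t₃ + t₂ * t₃ := by
  rw [schur, div_eq_iff h, Matrix.det_fin_three]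
  simp only [Matrix.of_apply, Matrix.cons_val', Matrix.cons_val_zero, Matrix.cons_val_one,
    Matrix.cons_val, Matrix.cons_val_fin_one, pow_zero]
  ring

theorem schur_neg_pair {a b : ℕ} (ha : Even a) (hb : Even b) {x : ℂ} (hx : x ≠ 0) (y : ℂ) :
    schur a b 0 x (-x) y = x ^ b * (x ^ (a + 2) - y ^ (a + 2)) / (x ^ 2 - y ^ 2) := by
  have hdet : (Matrix.of ![![x ^ (a + 2), (-x) ^ (a + 2), y ^ (a + 2)],
      ![x ^ (b + 1), (-x) ^ (b + 1), y ^ (b + 1)], ![x ^ 0, (-x) ^ 0, y ^ 0]]).det =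
      -2 * x * (x ^ b * (x ^ (a + 2) - y ^ (a + 2))) := by
    simp only [Matrix.det_fin_three, Matrix.of_apply, Matrix.cons_val', Matrix.cons_val_zero,
      Matrix.cons_val_one, Matrix.cons_val, Matrix.cons_val_fin_one, pow_zero,
      (ha.add even_two).neg_pow, hb.add_one.neg_pow]
    ring
  have hvdm : (x - -x) * (x - y) * (-x - y) = -2 * x * (x ^ 2 - y ^ 2) := by ring
  rw [schur, hdet, hvdm, mul_div_mul_left _ _ (mul_ne_zero (by norm_num) hx)]

section LaurentIdentities

variable {K : Type*} [Field K] {x : K}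

theorem pow_three_sub_inv_pow_three_ne_zero (hx : x ≠ 0) (hx6 : x ^ 6 ≠ 1) :
    x ^ 3 - x⁻¹ ^ 3 ≠ 0 := by
  rwa [inv_pow, sub_ne_zero, Ne, ← mul_eq_one_iff_eq_inv₀ (pow_ne_zero 3 hx), ← pow_add]

theorem pow_add_two_mul_sub_pow (hx : x ≠ 0) (m n : ℕ) :
    x ^ (m + 2 * n) - x ^ m = x ^ (m + n) * (x ^ n - x⁻¹ ^ n) := by
  rw [mul_sub, ← pow_add, inv_pow, pow_add x m n, mul_inv_cancel_right₀ (pow_ne_zero n hx)]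
  ring

theorem pow_two_mul_sub_inv_pow_four_mul (hx : x ≠ 0) (v : ℕ) :
    x ^ (2 * v) - x⁻¹ ^ (4 * v) = x⁻¹ ^ v * (x ^ (3 * v) - x⁻¹ ^ (3 * v)) := by
  have := pow_ne_zero v hx
  rw [pow_mul', pow_mul', pow_mul', pow_mul', inv_pow]
  field_simp

end LaurentIdentities

theorem numerator_factorization {x : ℂ} (hx : x ≠ 0) (hx6 : x ^ 6 ≠ 1) (m n : ℕ) :
    (x ^ (m + 2 * n) - x ^ m) * (x ^ (2 * (m + n + 1)) - (-(x ^ 2)⁻¹) ^ (2 * (m + n + 1))) /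
        (x ^ 2 - (-(x ^ 2)⁻¹) ^ 2) =
      (x ^ n - x⁻¹ ^ n) *
        ((x ^ (3 * (m + n + 1)) - x⁻¹ ^ (3 * (m + n + 1))) / (x ^ 3 - x⁻¹ ^ 3)) := by
  have := pow_three_sub_inv_pow_three_ne_zero hx hx6
  have hy : ∀ e, (-(x ^ 2)⁻¹) ^ (2 * e) = x⁻¹ ^ (4 * e) := fun e => by
    rw [pow_mul, neg_sq, ← inv_pow, ← pow_mul, ← pow_mul]; ring_nf
  have hsq : x ^ 2 - x⁻¹ ^ (4 * 1) = x⁻¹ * (x ^ 3 - x⁻¹ ^ 3) := by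
    simpa using pow_two_mul_sub_inv_pow_four_mul hx 1
  rw [hy, hy 1, hsq, pow_add_two_mul_sub_pow hx, pow_two_mul_sub_inv_pow_four_mul hx, pow_succ,
    inv_pow x (m + n)]
  field_simp

theorem g2FactorizationOddEven_general (k l : ℕ) (hk : Odd k) (hl : Even l) (x : ℂ) (hx : x ≠ 0)
    (hx6 : x ^ 6 ≠ 1) :
    thetaG2 k l x =
      -((x ^ ((k + 1) / 2) - x⁻¹ ^ ((k + 1) / 2)) / (x ^ 2 - x⁻¹ ^ 2)) *
        ((x ^ (3 * (k + 2 * l + 3) / 2) - x⁻¹ ^ (3 * (k + 2 * l + 3) / 2)) /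
          (x ^ 3 - x⁻¹ ^ 3)) := by
  obtain ⟨n, rfl⟩ := hk
  obtain ⟨m, rfl⟩ := hl
  have hvdm : (x - -x) * (x - -(x ^ 2)⁻¹) * (-x - -(x ^ 2)⁻¹) ≠ 0 := by
    rw [show (x - -x) * (x - -(x ^ 2)⁻¹) * (-x - -(x ^ 2)⁻¹) = -2 * (x ^ 3 - x⁻¹ ^ 3) by
      field_simp; ring]
    exact mul_ne_zero (by norm_num) (pow_three_sub_inv_pow_three_ne_zero hx hx6)
  have hden : x * -x + x * -(x ^ 2)⁻¹ + -x * -(x ^ 2)⁻¹ - (x + -x + -(x ^ 2)⁻¹) =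
      -(x ^ 2 - x⁻¹ ^ 2) := by
    ring
  rw [show (2 * n + 1 + 1) / 2 = n + 1 by omega,
    show 3 * (2 * n + 1 + 2 * (m + m) + 3) / 2 = 3 * (m + m + (n + 1) + 1) by omega,
    thetaG2, schur_neg_pair ⟨n + 2 * m + 1, by ring⟩ ⟨n + m + 1, by ring⟩ hx,
    schur_neg_pair ⟨n + 2 * m + 1, by ring⟩ ⟨m, rfl⟩ hx, schur_one_one_zero hvdm,
    schur_one_zero_zero hvdm, hden, ← sub_div, ← sub_mul,
    show 2 * n + 1 + (m + m) + 1 = m + m + 2 * (n + 1) by ring,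
    show 2 * n + 1 + 2 * (m + m) + 1 + 2 = 2 * (m + m + (n + 1) + 1) by ring,
    numerator_factorization hx hx6, div_neg, mul_div_right_comm, neg_mul]

/-- Factorization of `G₂(ℂ)` characters at `(x,−x,−x⁻²)`, case `k` odd and `l` even:
`Θ_{k,l}(x,−x,−x⁻²) = −[(x^{(k+1)/2} − x^{−(k+1)/2})/(x² − x⁻²)] ·
[(x^{3(k+2l+3)/2} − x^{−3(k+2l+3)/2})/(x³ − x⁻³)]`. -/
theorem g2FactorizationOddEven (k l : ℕ) (hk : Odd k) (hl : Even l) (x : ℂ) (hx : x ≠ 0)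
    (hx4 : x ^ 4 ≠ 1) (hx6 : x ^ 6 ≠ 1) :
    thetaG2 k l x =
      -((x ^ ((k + 1) / 2) - x⁻¹ ^ ((k + 1) / 2)) / (x ^ 2 - x⁻¹ ^ 2)) *
        ((x ^ (3 * (k + 2 * l + 3) / 2) - x⁻¹ ^ (3 * (k + 2 * l + 3) / 2)) /
          (x ^ 3 - x⁻¹ ^ 3)) :=
  g2FactorizationOddEven_general k l hk hl x hx hx6
end

section
/- Factorization of G₂(ℂ) characters at (x,−x,−x^{−2}), case k and l both even: Let k and l be even nonnegative integers, and let x be a complex number with x ≠ 0, x⁴ ≠ 1 and x⁶ ≠ 1. Then Θ_{k,l}(x,−x,−x^{−2}) = [(x^{(k+3l+4)/2} − x^{−(k+3l+4)/2}) / (x² − x^{−2})] · [(x^{3(k+l+2)/2} − x^{−3(k+l+2)/2}) / (x³ − x^{−3})]. (The two bracketed factors are the characters of irreducible SL(2,ℂ)-representations evaluated at (x²,x^{−2}) and (x³,x^{−3}) respectively.) -/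
set_option maxHeartbeats 1000000 in
/-- Factorization of `G₂(ℂ)` characters at `(x,−x,−x⁻²)`, case `k` and `l` both even:
`Θ_{k,l}(x,−x,−x⁻²) = [(x^{(k+3l+4)/2} − x^{−(k+3l+4)/2})/(x² − x⁻²)] ·
[(x^{3(k+l+2)/2} − x^{−3(k+l+2)/2})/(x³ − x⁻³)]`. -/
theorem g2FactorizationEvenEven (k l : ℕ) (hk : Even k) (hl : Even l) (x : ℂ) (hx : x ≠ 0)
    (hx4 : x ^ 4 ≠ 1) (hx6 : x ^ 6 ≠ 1) :
    thetaG2 k l x =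
      ((x ^ ((k + 3 * l + 4) / 2) - x⁻¹ ^ ((k + 3 * l + 4) / 2)) / (x ^ 2 - x⁻¹ ^ 2)) *
        ((x ^ (3 * (k + l + 2) / 2) - x⁻¹ ^ (3 * (k + l + 2) / 2)) / (x ^ 3 - x⁻¹ ^ 3)) := by
  obtain ⟨a, rfl⟩ := hk
  obtain ⟨b, rfl⟩ := hl
  have hx2 : (x ^ 2 : ℂ) ≠ 0 := pow_ne_zero _ hx
  have h2x : x - -x ≠ 0 := by
    rw [sub_neg_eq_add, ← two_mul]; exact mul_ne_zero two_ne_zero hx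
  have hxy : x - -(x ^ 2)⁻¹ ≠ 0 := by
    rw [sub_neg_eq_add]
    intro h
    apply hx6
    have h3 : x ^ 3 = -1 := by
      field_simp at h
      linear_combination h
    calc x ^ 6 = (x ^ 3) ^ 2 := by ring
    _ = 1 := by rw [h3]; norm_num
  have hyx : -x - -(x ^ 2)⁻¹ ≠ 0 := by
    intro h
    apply hx6
    have h3 : x ^ 3 = 1 := by
      field_simp at h
      linear_combination -h
    calc x ^ 6 = (x ^ 3) ^ 2 := by ring
    _ = 1 := by rw [h3]; norm_num
  have hD : (x - -x) * (x - -(x ^ 2)⁻¹) * (-x - -(x ^ 2)⁻¹) ≠ 0 :=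
    mul_ne_zero (mul_ne_zero h2x hxy) hyx
  have hW4 : (x ^ 2)⁻¹ - x ^ 2 ≠ 0 := by
    intro h
    apply hx4
    field_simp at h
    linear_combination -h
  have hW : schur 1 1 0 x (-x) (-(x ^ 2)⁻¹) - schur 1 0 0 x (-x) (-(x ^ 2)⁻¹)
      = (x ^ 2)⁻¹ - x ^ 2 := by
    simp only [schur, Matrix.det_fin_three, Matrix.of_apply, Matrix.cons_val', Matrix.cons_val_zero,
      Matrix.cons_val_one, Matrix.cons_val_two, Matrix.tail_cons, Matrix.head_cons,
      Matrix.empty_val', Matrix.cons_val_fin_one, Matrix.head_fin_const, pow_zero]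
    rw [div_sub_div_same, div_eq_iff hD]
    simp only [← inv_pow, ← pow_mul]
    ring
  -- denominators on RHS
  have hQ : x ^ 2 - x⁻¹ ^ 2 ≠ 0 := by
    intro h
    apply hx4
    field_simp at h
    linear_combination h
  have hS : x ^ 3 - x⁻¹ ^ 3 ≠ 0 := by
    intro h
    apply hx6
    field_simp at h
    linear_combination h
  rw [thetaG2, hW, div_mul_div_comm,
    div_eq_div_iff hW4 (mul_ne_zero hQ hS),
    schur, schur, Matrix.det_fin_three, Matrix.det_fin_three]
  simp only [Matrix.of_apply, Matrix.cons_val', Matrix.cons_val_zero, Matrix.cons_val_one,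
    Matrix.cons_val_two, Matrix.tail_cons, Matrix.head_cons, Matrix.empty_val',
    Matrix.cons_val_fin_one, Matrix.head_fin_const, pow_zero]
  rw [div_sub_div_same, div_mul_eq_mul_div, div_eq_iff hD]
  -- parity rewrites
  have o1 : Odd (a + a + 2 * (b + b) + 1 + 2) := by rw [Nat.odd_iff]; omega
  have e1 : Even (a + a + (b + b) + 1 + 1) := by rw [Nat.even_iff]; omega
  have o2 : Odd (b + b + 1) := by rw [Nat.odd_iff]; omega
  rw [show (a + a + 3 * (b + b) + 4) / 2 = a + 3 * b + 2 from by omega,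
    show 3 * (a + a + (b + b) + 2) / 2 = 3 * a + 3 * b + 3 from by omega]
  rw [o1.neg_pow x, e1.neg_pow x, o2.neg_pow x, o1.neg_pow ((x ^ 2)⁻¹),
    e1.neg_pow ((x ^ 2)⁻¹), o2.neg_pow ((x ^ 2)⁻¹)]
  simp only [← inv_pow, ← pow_mul]
  have hu : ∀ n : ℕ, x ^ n * x⁻¹ ^ n = 1 := fun n => by
    rw [← mul_pow, mul_inv_cancel₀ hx, one_pow]
  linear_combination (-2 : ℂ) * x ^ (4 * a + 6 * b + 4) * hu (3) +
      (2 : ℂ) * x ^ (4 * a + 6 * b) * hu (5) +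
      (-2 : ℂ) * x ^ (4) * x⁻¹ ^ (2 * a) * hu (2 * a + 4 * b + 4) +
      (2 : ℂ) * x⁻¹ ^ (2 * a + 2) * hu (2 * a + 4 * b + 5) +
      (2 : ℂ) * x⁻¹ ^ (2 * a) * hu (2 * a + 4 * b + 6) +
      (-2 : ℂ) * x⁻¹ ^ (2 * a + 6) * hu (2 * a + 4 * b + 3) +
      (-2 : ℂ) * x ^ (2 * a + 6) * hu (4 * b + 2) +
      (2 : ℂ) * x ^ (2 * a) * hu (4 * b + 5) +
      (2 : ℂ) * x ^ (2 * a + 2) * hu (4 * b + 4) +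
      (-2 : ℂ) * x ^ (2 * a) * x⁻¹ ^ (4) * hu (4 * b + 3) +
      (2 : ℂ) * x⁻¹ ^ (4 * a + 6 * b) * hu (2 * b + 6) +
      (-2 : ℂ) * x⁻¹ ^ (4 * a + 6 * b + 6) * hu (2 * b + 3) +
      (-2 : ℂ) * x⁻¹ ^ (4 * a + 6 * b + 4) * hu (2 * b + 4) +
      (2 : ℂ) * x⁻¹ ^ (4 * a + 6 * b + 10) * hu (2 * b + 1) +
      (-2 : ℂ) * x ^ (4 * a + 6 * b) * hu (6) +
      (2 : ℂ) * x ^ (4 * a + 6 * b + 4) * hu (4) +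
      (-2 : ℂ) * x⁻¹ ^ (2 * a) * hu (a + 3 * b + 5) +
      (2 : ℂ) * x⁻¹ ^ (2 * a + 6) * hu (a + 3 * b + 3) +
      (2 : ℂ) * x ^ (4) * x⁻¹ ^ (2 * a) * hu (a + 3 * b + 3) +
      (-2 : ℂ) * x⁻¹ ^ (2 * a + 2) * hu (a + 3 * b + 5) +
      (-2 : ℂ) * x ^ (2 * a + 2) * hu (a + 3 * b + 4) +
      (2 : ℂ) * x ^ (2 * a) * x⁻¹ ^ (4) * hu (a + 3 * b + 4) +
      (2 : ℂ) * x ^ (2 * a + 6) * hu (a + 3 * b + 2) +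
      (-2 : ℂ) * x ^ (2 * a) * hu (a + 3 * b + 6) +
      (2 : ℂ) * x⁻¹ ^ (4 * a + 6 * b + 4) * hu (3) +
      (-2 : ℂ) * x⁻¹ ^ (4 * a + 6 * b + 10) * hu (1) +
      (-2 : ℂ) * x⁻¹ ^ (4 * a + 6 * b) * hu (5) +
      (2 : ℂ) * x⁻¹ ^ (4 * a + 6 * b + 6) * hu (3)
end

section
/- Schur values at (x,−x,−x^{−2}) for k even, l odd: Let k be an even nonnegative integer and l an odd positive integer, and let x be a complex number with x ≠ 0 and x⁶ ≠ 1. Then S_{(k+2l+1,k+l+1,0)}(x,−x,−x^{−2}) = −(x^{−k−1} − x^{−k−3l−4}) / (x³ − x^{−3}) and S_{(k+2l+1,l,0)}(x,−x,−x^{−2}) = −(x^{k+3l+4} − x^{k+1}) / (x³ − x^{−3}). -/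
theorem schur_zero_eq (a b : ℕ) (t₁ t₂ t₃ : ℂ) :
    schur a b 0 t₁ t₂ t₃ =
      (t₁ ^ (a + 2) * (t₂ ^ (b + 1) - t₃ ^ (b + 1)) - t₂ ^ (a + 2) * (t₁ ^ (b + 1) - t₃ ^ (b + 1))
          + t₃ ^ (a + 2) * (t₁ ^ (b + 1) - t₂ ^ (b + 1))) /
        ((t₁ - t₂) * (t₁ - t₃) * (t₂ - t₃)) := by
  rw [schur, Matrix.det_fin_three]
  simp only [Matrix.of_apply, Matrix.cons_val', Matrix.cons_val_zero, Matrix.cons_val_one,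
    Matrix.head_cons, Matrix.empty_val', Matrix.cons_val_fin_one, Matrix.head_fin_const,
    Matrix.cons_val_two, Matrix.tail_cons, pow_zero]
  ring

theorem schur_neg_of_odd_of_even {a b : ℕ} (ha : Odd a) (hb : Even b) (x y : ℂ) :
    schur a b 0 x (-x) y =
      (x ^ (a + 2) * y ^ (b + 1) - x ^ (b + 1) * y ^ (a + 2)) / (x * (x ^ 2 - y ^ 2)) := by
  rw [schur_zero_eq, (ha.add_even even_two).neg_pow, hb.add_one.neg_pow]
  conv_rhs => rw [← mul_div_mul_left _ _ (show (-2 : ℂ) ≠ 0 by norm_num)]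
  congr 1 <;> ring

theorem schur_neg_of_odd_of_odd {a b : ℕ} (ha : Odd a) (hb : Odd b) (x y : ℂ) :
    schur a b 0 x (-x) y =
      -(x ^ (a + 2) * (x ^ (b + 1) - y ^ (b + 1))) / (x * (x ^ 2 - y ^ 2)) := by
  rw [schur_zero_eq, (ha.add_even even_two).neg_pow, hb.add_one.neg_pow]
  conv_rhs => rw [← mul_div_mul_left _ _ (show (-2 : ℂ) ≠ 0 by norm_num)]
  congr 1 <;> ring

section NegInvSq

variable {K : Type*}

theorem neg_inv_sq_pow_of_odd [DivisionRing K] {n : ℕ} (hn : Odd n) (x : K) :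
    (-(x ^ 2)⁻¹) ^ n = -x⁻¹ ^ (2 * n) := by
  rw [hn.neg_pow, pow_mul, ← inv_pow]

theorem neg_inv_sq_pow_of_even [DivisionRing K] {n : ℕ} (hn : Even n) (x : K) :
    (-(x ^ 2)⁻¹) ^ n = x⁻¹ ^ (2 * n) := by
  rw [hn.neg_pow, pow_mul, ← inv_pow]

theorem mul_sq_sub_neg_inv_sq_sq [Field K] {x : K} (hx : x ≠ 0) :
    x * (x ^ 2 - (-(x ^ 2)⁻¹) ^ 2) = x ^ 3 - x⁻¹ ^ 3 := by
  field_simp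

theorem pow_mul_inv_pow_of_add_eq [GroupWithZero K] {x : K} (hx : x ≠ 0) {m n N : ℕ}
    (h : m + n = N) : x ^ m * x⁻¹ ^ N = x⁻¹ ^ n := by
  rw [← h, pow_add, inv_pow, mul_inv_cancel_left₀ (pow_ne_zero _ hx)]

theorem pow_mul_inv_pow_of_eq_add [GroupWithZero K] {x : K} (hx : x ≠ 0) {m n N : ℕ}
    (h : N = m + n) : x ^ N * x⁻¹ ^ n = x ^ m := by
  rw [h, pow_add, inv_pow, mul_inv_cancel_right₀ (pow_ne_zero _ hx)]

end NegInvSq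

theorem g2SchurValues_general (k l : ℕ) (hk : Even k) (hl : Odd l) (x : ℂ) (hx : x ≠ 0) :
    schur (k + 2 * l + 1) (k + l + 1) 0 x (-x) (-(x ^ 2)⁻¹) =
        -((x⁻¹ ^ (k + 1) - x⁻¹ ^ (k + 3 * l + 4)) / (x ^ 3 - x⁻¹ ^ 3)) ∧
      schur (k + 2 * l + 1) l 0 x (-x) (-(x ^ 2)⁻¹) =
        -((x ^ (k + 3 * l + 4) - x ^ (k + 1)) / (x ^ 3 - x⁻¹ ^ 3)) := by
  have ha : Odd (k + 2 * l + 1) := (hk.add (even_two_mul l)).add_one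
  have hb : Even (k + l + 1) := (hk.add_odd hl).add_one
  constructor
  · rw [schur_neg_of_odd_of_even ha hb, mul_sq_sub_neg_inv_sq_sq hx,
      neg_inv_sq_pow_of_odd hb.add_one, neg_inv_sq_pow_of_odd (ha.add_even even_two), mul_neg,
      mul_neg, pow_mul_inv_pow_of_add_eq hx (n := k + 1) (by ring),
      pow_mul_inv_pow_of_add_eq hx (n := k + 3 * l + 4) (by ring), ← neg_div]
    ring
  · rw [schur_neg_of_odd_of_odd ha hl, mul_sq_sub_neg_inv_sq_sq hx,
      neg_inv_sq_pow_of_even hl.add_one, mul_sub, ← pow_add,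
      pow_mul_inv_pow_of_eq_add hx (m := k + 1) (by ring), ← neg_div]
    ring

/-- Schur values at `(x,−x,−x⁻²)` for `k` even and `l` odd:
`S_{(k+2l+1,k+l+1,0)} = −(x^{−k−1} − x^{−k−3l−4})/(x³ − x⁻³)` and
`S_{(k+2l+1,l,0)} = −(x^{k+3l+4} − x^{k+1})/(x³ − x⁻³)`. -/
theorem g2SchurValues (k l : ℕ) (hk : Even k) (hl : Odd l) (x : ℂ) (hx : x ≠ 0)
    (hx6 : x ^ 6 ≠ 1) :
    schur (k + 2 * l + 1) (k + l + 1) 0 x (-x) (-(x ^ 2)⁻¹) =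
        -((x⁻¹ ^ (k + 1) - x⁻¹ ^ (k + 3 * l + 4)) / (x ^ 3 - x⁻¹ ^ 3)) ∧
      schur (k + 2 * l + 1) l 0 x (-x) (-(x ^ 2)⁻¹) =
        -((x ^ (k + 3 * l + 4) - x ^ (k + 1)) / (x ^ 3 - x⁻¹ ^ 3)) :=
  g2SchurValues_general k l hk hl x hx
end

section
/- Character values of G₂(ℂ) at the order-two conjugacy class: Let k and l be nonnegative integers. Then the limit of Θ_{k,l}(x,−x,−x^{−2}) as x → 1 (through complex x with x ≠ 0 and x⁶ ≠ 1) exists and equals: 0 if k and l are both odd; (k+l+2)(k+3l+4)/8 if k and l are both even; −(k+1)(k+2l+3)/8 if k is odd and l is even; and −(l+1)(2k+3l+5)/8 if k is even and l is odd. (This limit is the character of the irreducible G₂(ℂ)-representation with highest weight kω₁+lω₂ at the unique conjugacy class of order two in G₂(ℂ).) -/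
lemma hw_fact (x : ℂ) (hx : x ≠ 0) : ∀ n : ℕ, x ^ (2 * n) * ((x ^ 2)⁻¹) ^ n = 1 := fun n => by
  rw [inv_pow, ← pow_mul]; exact mul_inv_cancel₀ (pow_ne_zero _ hx)

lemma hDx (x : ℂ) (hx : x ≠ 0) :
    (x - -x) * (x - -(x ^ 2)⁻¹) * (-x - -(x ^ 2)⁻¹) = 2 * (1 - x ^ 6) / x ^ 3 := by
  rw [eq_div_iff (pow_ne_zero 3 hx)]
  linear_combination 2 * hw_fact x hx 2

lemma denom_eq (x : ℂ) (hx : x ≠ 0) (h6 : x ^ 6 ≠ 1) :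
    schur 1 1 0 x (-x) (-(x ^ 2)⁻¹) - schur 1 0 0 x (-x) (-(x ^ 2)⁻¹)
      = (1 - x ^ 4) / x ^ 2 := by
  have hw := hw_fact x hx
  have h6' : (2 : ℂ) * (1 - x ^ 6) ≠ 0 := by
    apply mul_ne_zero two_ne_zero
    intro h
    exact h6 (by linear_combination -h)
  unfold schur
  simp only [Matrix.det_fin_three, Matrix.of_apply, Matrix.cons_val', Matrix.cons_val_zero,
    Matrix.cons_val_one, Matrix.head_cons, Matrix.empty_val', Matrix.cons_val_fin_one,
    Matrix.head_fin_const, Matrix.cons_val_two, Matrix.tail_cons]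
  rw [div_sub_div_same, hDx x hx, div_div_eq_mul_div,
    div_eq_div_iff h6' (pow_ne_zero 2 hx)]
  linear_combination (-2 * x ^ 4) * hw 2 + (-2 * x ^ 6) * hw 1 + 2 * hw 3

lemma numer_ee (p q : ℕ) (x : ℂ) (hx : x ≠ 0) (h6 : x ^ 6 ≠ 1) :
    schur (2 * p + 2 * (2 * q) + 1) (2 * p + 2 * q + 1) 0 x (-x) (-(x ^ 2)⁻¹) -
      schur (2 * p + 2 * (2 * q) + 1) (2 * q) 0 x (-x) (-(x ^ 2)⁻¹)
    = 2 * ((x ^ (6 * p + 6 * q + 6) - 1) * (x ^ (2 * p + 6 * q + 4) - 1)) * x ^ 3 /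
        (x ^ (4 * p + 6 * q + 5) * (2 * (1 - x ^ 6))) := by
  have hw := hw_fact x hx
  have h6' : (2 : ℂ) * (1 - x ^ 6) ≠ 0 := by
    apply mul_ne_zero two_ne_zero
    intro h; exact h6 (by linear_combination -h)
  unfold schur
  simp only [Matrix.det_fin_three, Matrix.of_apply, Matrix.cons_val', Matrix.cons_val_zero,
    Matrix.cons_val_one, Matrix.head_cons, Matrix.empty_val', Matrix.cons_val_fin_one,
    Matrix.head_fin_const, Matrix.cons_val_two, Matrix.tail_cons]
  rw [div_sub_div_same, hDx x hx, div_div_eq_mul_div,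
    div_eq_div_iff h6' (mul_ne_zero (pow_ne_zero _ hx) h6')]
  simp only [neg_pow x, neg_pow ((x ^ 2)⁻¹), pow_add, pow_mul, neg_one_sq, one_pow, pow_one,
    pow_zero, mul_one, one_mul]
  linear_combination (x ^ 3 * (2 * (1 - x ^ 6))) *
    ((-2 * x ^ (2 * p + 6 * q + 4)) * hw (2 * p + 2 * q + 2) +
     (-2 * x ^ (6 * p + 6 * q + 6)) * hw (2 * q + 1) + 2 * hw (2 * p + 4 * q + 3))

lemma numer_eo (p q : ℕ) (x : ℂ) (hx : x ≠ 0) (h6 : x ^ 6 ≠ 1) :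
    schur (2 * p + 2 * (2 * q + 1) + 1) (2 * p + (2 * q + 1) + 1) 0 x (-x) (-(x ^ 2)⁻¹) -
      schur (2 * p + 2 * (2 * q + 1) + 1) (2 * q + 1) 0 x (-x) (-(x ^ 2)⁻¹)
    = -2 * ((x ^ (6 * q + 6) - 1) * (x ^ (4 * p + 6 * q + 8) - 1)) * x ^ 3 /
        (x ^ (2 * p + 6 * q + 7) * (2 * (1 - x ^ 6))) := by
  have hw := hw_fact x hx
  have h6' : (2 : ℂ) * (1 - x ^ 6) ≠ 0 := by
    apply mul_ne_zero two_ne_zero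
    intro h; exact h6 (by linear_combination -h)
  unfold schur
  simp only [Matrix.det_fin_three, Matrix.of_apply, Matrix.cons_val', Matrix.cons_val_zero,
    Matrix.cons_val_one, Matrix.head_cons, Matrix.empty_val', Matrix.cons_val_fin_one,
    Matrix.head_fin_const, Matrix.cons_val_two, Matrix.tail_cons]
  rw [div_sub_div_same, hDx x hx, div_div_eq_mul_div,
    div_eq_div_iff h6' (mul_ne_zero (pow_ne_zero _ hx) h6')]
  simp only [neg_pow x, neg_pow ((x ^ 2)⁻¹), pow_add, pow_mul, neg_one_sq, one_pow, pow_one,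
    pow_zero, mul_one, one_mul]
  linear_combination (x ^ 3 * (2 * (1 - x ^ 6))) *
    ((2 * x ^ (6 * q + 6)) * hw (2 * p + 2 * q + 3) +
     (2 * x ^ (4 * p + 6 * q + 8)) * hw (2 * q + 2) + (-2) * hw (2 * p + 4 * q + 5))

lemma numer_oe (p q : ℕ) (x : ℂ) (hx : x ≠ 0) (h6 : x ^ 6 ≠ 1) :
    schur (2 * p + 1 + 2 * (2 * q) + 1) (2 * p + 1 + 2 * q + 1) 0 x (-x) (-(x ^ 2)⁻¹) -
      schur (2 * p + 1 + 2 * (2 * q) + 1) (2 * q) 0 x (-x) (-(x ^ 2)⁻¹)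
    = -2 * ((x ^ (2 * p + 2) - 1) * (x ^ (6 * p + 12 * q + 12) - 1)) * x ^ 3 /
        (x ^ (4 * p + 6 * q + 7) * (2 * (1 - x ^ 6))) := by
  have hw := hw_fact x hx
  have h6' : (2 : ℂ) * (1 - x ^ 6) ≠ 0 := by
    apply mul_ne_zero two_ne_zero
    intro h; exact h6 (by linear_combination -h)
  unfold schur
  simp only [Matrix.det_fin_three, Matrix.of_apply, Matrix.cons_val', Matrix.cons_val_zero,
    Matrix.cons_val_one, Matrix.head_cons, Matrix.empty_val', Matrix.cons_val_fin_one,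
    Matrix.head_fin_const, Matrix.cons_val_two, Matrix.tail_cons]
  rw [div_sub_div_same, hDx x hx, div_div_eq_mul_div,
    div_eq_div_iff h6' (mul_ne_zero (pow_ne_zero _ hx) h6')]
  simp only [neg_pow x, neg_pow ((x ^ 2)⁻¹), pow_add, pow_mul, neg_one_sq, one_pow, pow_one,
    pow_zero, mul_one, one_mul]
  linear_combination (x ^ 3 * (2 * (1 - x ^ 6))) *
    ((2 * x ^ (2 * p + 2) - 2) * hw (2 * p + 4 * q + 4))

lemma numer_oo (p q : ℕ) (x : ℂ) :
    schur (2 * p + 1 + 2 * (2 * q + 1) + 1) (2 * p + 1 + (2 * q + 1) + 1) 0 x (-x) (-(x ^ 2)⁻¹) -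
      schur (2 * p + 1 + 2 * (2 * q + 1) + 1) (2 * q + 1) 0 x (-x) (-(x ^ 2)⁻¹) = 0 := by
  unfold schur
  simp only [Matrix.det_fin_three, Matrix.of_apply, Matrix.cons_val', Matrix.cons_val_zero,
    Matrix.cons_val_one, Matrix.head_cons, Matrix.empty_val', Matrix.cons_val_fin_one,
    Matrix.head_fin_const, Matrix.cons_val_two, Matrix.tail_cons]
  rw [div_sub_div_same]
  convert zero_div _ using 2
  simp only [neg_pow x, neg_pow ((x ^ 2)⁻¹), pow_add, pow_mul, neg_one_sq, one_pow, pow_one,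
    pow_zero, mul_one, one_mul]
  ring

lemma theta_ee (p q : ℕ) (x : ℂ) (hx : x ≠ 0) (h4 : x ^ 4 ≠ 1) (h6 : x ^ 6 ≠ 1) :
    thetaG2 (2 * p) (2 * q) x
      = 1 * ((x ^ (6 * p + 6 * q + 6) - 1) * (x ^ (2 * p + 6 * q + 4) - 1)) /
          (x ^ (4 * p + 6 * q) * ((x ^ 4 - 1) * (x ^ 6 - 1))) := by
  have h4' : (1 : ℂ) - x ^ 4 ≠ 0 := fun h => h4 (by linear_combination -h)
  have h6' : (1 : ℂ) - x ^ 6 ≠ 0 := fun h => h6 (by linear_combination -h)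
  have h4'' : (x : ℂ) ^ 4 - 1 ≠ 0 := fun h => h4 (by linear_combination h)
  have h6'' : (x : ℂ) ^ 6 - 1 ≠ 0 := fun h => h6 (by linear_combination h)
  unfold thetaG2
  rw [numer_ee p q x hx h6, denom_eq x hx h6]
  field_simp
  ring

lemma theta_eo (p q : ℕ) (x : ℂ) (hx : x ≠ 0) (h4 : x ^ 4 ≠ 1) (h6 : x ^ 6 ≠ 1) :
    thetaG2 (2 * p) (2 * q + 1) x
      = -1 * ((x ^ (6 * q + 6) - 1) * (x ^ (4 * p + 6 * q + 8) - 1)) /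
          (x ^ (2 * p + 6 * q + 2) * ((x ^ 4 - 1) * (x ^ 6 - 1))) := by
  have h4' : (1 : ℂ) - x ^ 4 ≠ 0 := fun h => h4 (by linear_combination -h)
  have h6' : (1 : ℂ) - x ^ 6 ≠ 0 := fun h => h6 (by linear_combination -h)
  have h4'' : (x : ℂ) ^ 4 - 1 ≠ 0 := fun h => h4 (by linear_combination h)
  have h6'' : (x : ℂ) ^ 6 - 1 ≠ 0 := fun h => h6 (by linear_combination h)
  unfold thetaG2
  rw [numer_eo p q x hx h6, denom_eq x hx h6]
  field_simp
  ring

lemma theta_oe (p q : ℕ) (x : ℂ) (hx : x ≠ 0) (h4 : x ^ 4 ≠ 1) (h6 : x ^ 6 ≠ 1) :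
    thetaG2 (2 * p + 1) (2 * q) x
      = -1 * ((x ^ (2 * p + 2) - 1) * (x ^ (6 * p + 12 * q + 12) - 1)) /
          (x ^ (4 * p + 6 * q + 2) * ((x ^ 4 - 1) * (x ^ 6 - 1))) := by
  have h4' : (1 : ℂ) - x ^ 4 ≠ 0 := fun h => h4 (by linear_combination -h)
  have h6' : (1 : ℂ) - x ^ 6 ≠ 0 := fun h => h6 (by linear_combination -h)
  have h4'' : (x : ℂ) ^ 4 - 1 ≠ 0 := fun h => h4 (by linear_combination h)
  have h6'' : (x : ℂ) ^ 6 - 1 ≠ 0 := fun h => h6 (by linear_combination h)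
  unfold thetaG2
  rw [numer_oe p q x hx h6, denom_eq x hx h6]
  field_simp
  ring

lemma theta_oo (p q : ℕ) (x : ℂ) :
    thetaG2 (2 * p + 1) (2 * q + 1) x = 0 := by
  unfold thetaG2
  rw [numer_oo p q x, zero_div]

open Filter Topology Finset in
lemma tendsto_aux (a b m : ℕ) (c : ℂ) (f : ℂ → ℂ)
    (hf : ∀ x : ℂ, x ≠ 0 → x ^ 4 ≠ 1 → x ^ 6 ≠ 1 →
      f x = c * ((x ^ a - 1) * (x ^ b - 1)) / (x ^ m * ((x ^ 4 - 1) * (x ^ 6 - 1)))) :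
    Tendsto f (𝓝[{x : ℂ | x ≠ 0 ∧ x ^ 6 ≠ 1}] 1) (𝓝 (c * (a * b) / 24)) := by
  set g : ℂ → ℂ := fun x => c * ((∑ i ∈ range a, x ^ i) * (∑ i ∈ range b, x ^ i)) /
      (x ^ m * ((∑ i ∈ range 4, x ^ i) * (∑ i ∈ range 6, x ^ i))) with hg
  have hcont : ContinuousAt g 1 := by
    apply ContinuousAt.div
    · fun_prop
    · fun_prop
    · simp [Finset.sum_range_succ]
  have hg1 : g 1 = c * (a * b) / 24 := by
    simp [hg, Finset.sum_range_succ]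
    norm_num
  have htends : Tendsto g (𝓝[{x : ℂ | x ≠ 0 ∧ x ^ 6 ≠ 1}] 1) (𝓝 (c * (a * b) / 24)) := by
    rw [← hg1]; exact hcont.tendsto.mono_left nhdsWithin_le_nhds
  apply htends.congr'
  have hev : ∀ᶠ x in 𝓝[{x : ℂ | x ≠ 0 ∧ x ^ 6 ≠ 1}] (1 : ℂ), ‖x - 1‖ < 1 / 2 := by
    apply eventually_nhdsWithin_of_eventually_nhds
    have hten : Tendsto (fun x : ℂ => ‖x - 1‖) (𝓝 1) (𝓝 0) := by
      have h1 : ContinuousAt (fun x : ℂ => ‖x - 1‖) 1 := by fun_prop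
      simpa using h1.tendsto
    exact hten.eventually_lt_const (by norm_num)
  filter_upwards [hev, self_mem_nhdsWithin] with x h12 hxs
  obtain ⟨hx0, hx6⟩ := hxs
  have hx1 : x ≠ 1 := fun h => hx6 (by rw [h]; norm_num)
  have hsub : x - 1 ≠ 0 := sub_ne_zero.mpr hx1
  have hx4 : x ^ 4 ≠ 1 := by
    intro h
    have h2 : (x ^ 2 - 1) * (x ^ 2 + 1) = 0 := by linear_combination h
    rcases mul_eq_zero.mp h2 with h2 | h2
    · refine hx6 ?_
      have hx2 : x ^ 2 = 1 := by linear_combination h2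
      calc x ^ 6 = (x ^ 2) ^ 3 := by ring
      _ = 1 := by rw [hx2]; norm_num
    · have h2v : x ^ 2 = -1 := by linear_combination h2
      have hfac : ‖x ^ 2 - 1‖ = ‖x - 1‖ * ‖x + 1‖ := by
        rw [show x ^ 2 - 1 = (x - 1) * (x + 1) by ring, norm_mul]
      have hplus : ‖x + 1‖ ≤ ‖x - 1‖ + 2 := by
        calc ‖x + 1‖ = ‖(x - 1) + 2‖ := by ring_nf
        _ ≤ ‖x - 1‖ + ‖(2 : ℂ)‖ := norm_add_le _ _
        _ = ‖x - 1‖ + 2 := by norm_num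
      have h2n : ‖x ^ 2 - 1‖ = 2 := by rw [h2v]; norm_num
      nlinarith [norm_nonneg (x - 1), norm_nonneg (x + 1)]
  rw [hg]
  simp only
  rw [hf x hx0 hx4 hx6]
  have e : ∀ n : ℕ, x ^ n - 1 = (∑ i ∈ range n, x ^ i) * (x - 1) := fun n => (geom_sum_mul x n).symm
  rw [e a, e b, e 4, e 6]
  rw [show c * ((∑ i ∈ range a, x ^ i) * (∑ i ∈ range b, x ^ i)) /
        (x ^ m * ((∑ i ∈ range 4, x ^ i) * (∑ i ∈ range 6, x ^ i)))
      = c * ((∑ i ∈ range a, x ^ i) * (∑ i ∈ range b, x ^ i)) * (x - 1) ^ 2 /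
        (x ^ m * ((∑ i ∈ range 4, x ^ i) * (∑ i ∈ range 6, x ^ i)) * (x - 1) ^ 2) from
    (mul_div_mul_right _ _ (pow_ne_zero 2 hsub)).symm]
  congr 1 <;> ring

open Filter Topology in
/-- Character values of `G₂(ℂ)` at the order-two conjugacy class: the limit of
`Θ_{k,l}(x,−x,−x⁻²)` as `x → 1` (through `x ≠ 0`, `x⁶ ≠ 1`) is `0` if `k, l` both odd,
`(k+l+2)(k+3l+4)/8` if both even, `−(k+1)(k+2l+3)/8` if `k` odd and `l` even, and
`−(l+1)(2k+3l+5)/8` if `k` even and `l` odd. -/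
theorem g2OrderTwoCharacter (k l : ℕ) :
    Tendsto (fun x : ℂ => thetaG2 k l x)
      (𝓝[{x : ℂ | x ≠ 0 ∧ x ^ 6 ≠ 1}] 1)
      (𝓝 (if Odd k ∧ Odd l then 0
        else if Even k ∧ Even l then ((k : ℂ) + l + 2) * ((k : ℂ) + 3 * l + 4) / 8
        else if Odd k then -(((k : ℂ) + 1) * ((k : ℂ) + 2 * l + 3)) / 8
        else -(((l : ℂ) + 1) * (2 * (k : ℂ) + 3 * l + 5)) / 8)) := by
  rcases Nat.even_or_odd k with hk | hk <;> rcases Nat.even_or_odd l with hl | hl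
  · -- k even, l even
    obtain ⟨p, hp⟩ := hk
    obtain ⟨q, hq⟩ := hl
    have hp2 : k = 2 * p := by omega
    have hq2 : l = 2 * q := by omega
    subst hp2 hq2
    rw [if_neg (by rintro ⟨h1, -⟩; rw [Nat.odd_iff] at h1; omega),
      if_pos ⟨⟨p, by ring⟩, ⟨q, by ring⟩⟩]
    have := tendsto_aux (6 * p + 6 * q + 6) (2 * p + 6 * q + 4) (4 * p + 6 * q) 1
      (fun x => thetaG2 (2 * p) (2 * q) x) (fun x hx h4 h6 => theta_ee p q x hx h4 h6)
    convert this using 2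
    push_cast
    ring
  · -- k even, l odd
    obtain ⟨p, hp⟩ := hk
    obtain ⟨q, hq⟩ := hl
    have hp2 : k = 2 * p := by omega
    subst hp2 hq
    rw [if_neg (by rintro ⟨h1, -⟩; rw [Nat.odd_iff] at h1; omega),
      if_neg (by rintro ⟨-, h2⟩; rw [Nat.even_iff] at h2; omega),
      if_neg (by intro h1; rw [Nat.odd_iff] at h1; omega)]
    have := tendsto_aux (6 * q + 6) (4 * p + 6 * q + 8) (2 * p + 6 * q + 2) (-1)
      (fun x => thetaG2 (2 * p) (2 * q + 1) x) (fun x hx h4 h6 => theta_eo p q x hx h4 h6)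
    convert this using 2
    push_cast
    ring
  · -- k odd, l even
    obtain ⟨p, hp⟩ := hk
    obtain ⟨q, hq⟩ := hl
    have hq2 : l = 2 * q := by omega
    subst hp hq2
    rw [if_neg (by rintro ⟨-, h2⟩; rw [Nat.odd_iff] at h2; omega),
      if_neg (by rintro ⟨h1, -⟩; rw [Nat.even_iff] at h1; omega),
      if_pos ⟨p, by ring⟩]
    have := tendsto_aux (2 * p + 2) (6 * p + 12 * q + 12) (4 * p + 6 * q + 2) (-1)
      (fun x => thetaG2 (2 * p + 1) (2 * q) x) (fun x hx h4 h6 => theta_oe p q x hx h4 h6)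
    convert this using 2
    push_cast
    ring
  · -- k odd, l odd
    obtain ⟨p, hp⟩ := hk
    obtain ⟨q, hq⟩ := hl
    subst hp hq
    rw [if_pos ⟨⟨p, by ring⟩, ⟨q, by ring⟩⟩]
    rw [show (fun x : ℂ => thetaG2 (2 * p + 1) (2 * q + 1) x) = fun _ => (0 : ℂ) from
      funext fun x => theta_oo p q x]
    exact tendsto_const_nhds
end
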